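/- arXiv:2107.14276 — 6 statements merged into one kernel-verified Lean document; each statement's English description precedes it below -/
import Mathlib

section
/- Let (R,M) be a discrete valuation domain with finite residue field and quotient field K. (1) For every a ∈ M with a ≠ 0 and every b ∈ R∖M, the linear polynomial a·x − b is absolutely irreducible in Int(R). (2) Conversely, if F ∈ Int(R) is absolutely irreducible, splits into linear factors over K, and has at least one root lying in K∖R, then F is associated in Int(R) to a polynomial a·x − b with a ∈ M and b ∈ R∖M; in particular F has degree 1. -/
open Polynomial

section Defs

variable (R K : Type*)

/-- `Int(R) = {F ∈ K[x] ∣ F(R) ⊆ R}`, the ring of integer-valued polynomials,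
as a subring of `K[x]`. -/
def intPoly [CommRing R] [CommRing K] [Algebra R K] : Subring (Polynomial K) where
  carrier := {F | ∀ r : R, ∃ a : R, F.eval (algebraMap R K r) = algebraMap R K a}
  mul_mem' := by
    rintro f g hf hg r
    obtain ⟨a, ha⟩ := hf r
    obtain ⟨b, hb⟩ := hg r
    exact ⟨a * b, by simp [ha, hb]⟩
  one_mem' := fun r => ⟨1, by simp⟩
  add_mem' := by
    rintro f g hf hg r
    obtain ⟨a, ha⟩ := hf r
    obtain ⟨b, hb⟩ := hg r
    exact ⟨a + b, by simp [ha, hb]⟩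
  zero_mem' := fun r => ⟨0, by simp⟩
  neg_mem' := by
    rintro f hf r
    obtain ⟨a, ha⟩ := hf r
    exact ⟨-a, by simp [ha]⟩

/-- Polynomials with coefficients in `R` are integer-valued. -/
theorem map_mem_intPoly [CommRing R] [CommRing K] [Algebra R K] (f : Polynomial R) :
    f.map (algebraMap R K) ∈ intPoly R K :=
  fun r => ⟨f.eval r, by rw [Polynomial.eval_map, Polynomial.eval₂_at_apply]⟩

/-- An element `d` of a commutative monoid is absolutely irreducible if it is irreducible
and, for every `n ≥ 1`, the only factorization of `d ^ n` into irreducibles is, up to order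
and unit factors, `d ⋯ d` (`n` copies). -/
def AbsolutelyIrreducible {α : Type*} [CommMonoid α] (d : α) : Prop :=
  Irreducible d ∧ ∀ n : ℕ, 1 ≤ n → ∀ l : Multiset α, (∀ a ∈ l, Irreducible a) →
    l.prod = d ^ n → Multiset.card l = n ∧ ∀ a ∈ l, Associated a d

/-- The fixed divisor of a polynomial `f ∈ R[x]`: the ideal of `R` generated by the
values of `f` on `R`. -/
def fixDiv [CommRing R] (f : Polynomial R) : Ideal R :=
  Ideal.span (Set.range fun a => f.eval a)

/-- The fixed divisor of an integer-valued polynomial `F ∈ Int(R)`: the ideal of `R`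
generated by (the elements of `R` representing) the values of `F` on `R`. -/
def fixDivK [CommRing R] [CommRing K] [Algebra R K] (F : Polynomial K) : Ideal R :=
  Ideal.span {a : R | ∃ r : R, F.eval (algebraMap R K r) = algebraMap R K a}

/-- The (normalized additive) valuation of a nonzero element of a discrete valuation
ring: the largest `n` such that `x ∈ M ^ n`, where `M` is the maximal ideal. -/
noncomputable def mval [CommRing R] [IsLocalRing R] (x : R) : ℕ :=
  sSup {n : ℕ | x ∈ IsLocalRing.maximalIdeal R ^ n}

open scoped Classical in
/-- The valuation `v : R → ℕ∞`, with `v 0 = ⊤`. -/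
noncomputable def vR [CommRing R] [IsLocalRing R] (x : R) : ℕ∞ :=
  if x = 0 then ⊤ else (mval R x : ℕ∞)

open scoped Classical in
/-- The valuation extended to the quotient field `K`, with `v 0 = ⊤`. -/
noncomputable def vK [CommRing R] [IsLocalRing R] [CommRing K] [Algebra R K]
    [IsLocalization (nonZeroDivisors R) K] (x : K) : WithTop ℤ :=
  if x = 0 then ⊤
  else (((mval R (IsLocalization.sec (nonZeroDivisors R) x).1 : ℤ) -
        (mval R ((IsLocalization.sec (nonZeroDivisors R) x).2 : R) : ℤ) : ℤ) : WithTop ℤ)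

/-- The residue class `s + M ^ n` of `s` modulo the `n`-th power of the maximal ideal. -/
def resClass [CommRing R] [IsLocalRing R] (s : R) (n : ℕ) : Set R :=
  {x | x - s ∈ IsLocalRing.maximalIdeal R ^ n}

/-- A finite set `S ⊆ R` is balanced if, letting `n s` for each `s ∈ S` be the minimal
non-negative integer with `(s + M ^ (n s)) ∩ S = {s}`, the residue classes `s + M ^ (n s)`
(`s ∈ S`) are pairwise disjoint and cover `R`. -/
def IsBalanced [CommRing R] [IsLocalRing R] (S : Finset R) : Prop :=
  S.Nonempty ∧
  ∃ n : R → ℕ,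
    (∀ s ∈ S, resClass R s (n s) ∩ (S : Set R) = {s} ∧
      ∀ k : ℕ, resClass R s k ∩ (S : Set R) = {s} → n s ≤ k) ∧
    (∀ s ∈ S, ∀ t ∈ S, s ≠ t → Disjoint (resClass R s (n s)) (resClass R t (n t))) ∧
    (⋃ s ∈ S, resClass R s (n s)) = Set.univ

/-- `ρ` describes the `M`-adic partition `C_S` associated to `S`: the partition of `R`
into the residue classes `s + M ^ (ρ s)`, `s ∈ S`, such that each block contains both a
residue class of `M ^ (ρ s + 1)` intersecting `S` and one disjoint from `S`. -/
def IsSPartition [CommRing R] [IsLocalRing R] (S : Finset R) (ρ : R → ℕ) : Prop :=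
  (⋃ s ∈ S, resClass R s (ρ s)) = Set.univ ∧
  (∀ s ∈ S, ∀ t ∈ S,
    resClass R s (ρ s) = resClass R t (ρ t) ∨
      Disjoint (resClass R s (ρ s)) (resClass R t (ρ t))) ∧
  (∀ s ∈ S,
    (∃ u : R, resClass R u (ρ s + 1) ⊆ resClass R s (ρ s) ∧
      (resClass R u (ρ s + 1) ∩ (S : Set R)).Nonempty) ∧
    (∃ u : R, resClass R u (ρ s + 1) ⊆ resClass R s (ρ s) ∧
      resClass R u (ρ s + 1) ∩ (S : Set R) = ∅))

/-- `S'` is a balanced set associated to `S` (relative to the partition data `ρ` of `C_S`):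
`S' ⊆ S` is balanced, consists of one representative per block of `C_S`, and its associated
partition `C_{S'}` coincides with `C_S`. -/
def IsAssociatedBalancedSubset [CommRing R] [IsLocalRing R] (S S' : Finset R) (ρ : R → ℕ) :
    Prop :=
  S' ⊆ S ∧ IsBalanced R S' ∧
  (∀ s ∈ S', ∀ t ∈ S', s ≠ t → Disjoint (resClass R s (ρ s)) (resClass R t (ρ t))) ∧
  (⋃ s ∈ S', resClass R s (ρ s)) = Set.univ

open scoped Classical in
/-- The partition matrix of the partition `{s + M ^ (ρ s) : s ∈ S}`: diagonal entries
`ρ s`, off-diagonal entries `v (s - t)`. -/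
noncomputable def partitionMatrix [CommRing R] [IsLocalRing R] (S : Finset R) (ρ : R → ℕ) :
    Matrix {x // x ∈ S} {x // x ∈ S} ℤ :=
  Matrix.of fun s t =>
    if (s : R) = (t : R) then (ρ (s : R) : ℤ) else (mval R ((s : R) - (t : R)) : ℤ)

/-- `m` is the vector of multiplicities of the equalizing polynomial of `S`: the unique
vector of positive integers with gcd `1` such that `A · m = e · (1, …, 1)ᵀ` for some
non-negative integer `e`, where `A` is the partition matrix. -/
def IsEqualizingVector [CommRing R] [IsLocalRing R] (S : Finset R) (ρ : R → ℕ) (m : R → ℕ) :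
    Prop :=
  (∀ s ∈ S, 0 < m s) ∧ S.gcd m = 1 ∧
  ∃ e : ℕ, ∀ s : {x // x ∈ S},
    (∑ t : {x // x ∈ S}, partitionMatrix R S ρ s t * (m (t : R) : ℤ)) = (e : ℤ)

/-- `f` is the equalizing polynomial of `S`. -/
def IsEqualizingPoly [CommRing R] [IsLocalRing R] (S : Finset R) (f : Polynomial R) : Prop :=
  ∃ (ρ : R → ℕ) (m : R → ℕ), IsSPartition R S ρ ∧ IsEqualizingVector R S ρ m ∧
    f = ∏ s ∈ S, (Polynomial.X - Polynomial.C s) ^ m s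

/-- The posh set of `f ∈ R[x]`: the set of `r ∈ R` where `v (f r)` exceeds
`min_{t ∈ R} v (f t)`. -/
noncomputable def poshR [CommRing R] [IsLocalRing R] (f : Polynomial R) : Set R :=
  {r : R | (⨅ t : R, vR R (f.eval t)) < vR R (f.eval r)}

/-- The posh set of `F ∈ K[x]`: the set of `r ∈ R` where `v (F r)` exceeds
`min_{t ∈ R} v (F t)`. -/
def poshK [CommRing R] [IsLocalRing R] [CommRing K] [Algebra R K]
    [IsLocalization (nonZeroDivisors R) K] (F : Polynomial K) : Set R :=
  {r : R | ∃ t : R, vK R K (F.eval (algebraMap R K t)) < vK R K (F.eval (algebraMap R K r))}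

/-- `r` lies in an `S`-poor neighborhood of the partition `C_S` (described by `ρ`):
a residue class `r + M ^ (ρ s + 1)` disjoint from `S` inside a block `s + M ^ (ρ s)`. -/
def IsPoorElt [CommRing R] [IsLocalRing R] (S : Finset R) (ρ : R → ℕ) (r : R) : Prop :=
  ∃ s ∈ S, r ∈ resClass R s (ρ s) ∧ resClass R r (ρ s + 1) ∩ (S : Set R) = ∅

/-- The rich set of `S`: the union of the `S`-rich neighborhoods `s + M ^ (ρ s + 1)`,
`s ∈ S`. -/
def richSet [CommRing R] [IsLocalRing R] (S : Finset R) (ρ : R → ℕ) : Set R :=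
  ⋃ s ∈ S, resClass R s (ρ s + 1)

/-- `a` is an `M`-ordering (`P`-ordering) of `R`. -/
def IsMOrdering [CommRing R] [IsLocalRing R] (a : ℕ → R) : Prop :=
  ∀ k : ℕ, ∀ x : R,
    vR R (∏ i ∈ Finset.range k, (a k - a i)) ≤ vR R (∏ i ∈ Finset.range k, (x - a i))

end Defs

/-! Since `a ∈ M` and `b` is a unit, `g = a x - b` takes unit values on `R`, so whenever `g`
divides an integer-valued `F` in `K[x]` the cofactor `F / g` is again integer-valued. Hence `g`,
being prime in `K[x]`, stays prime in `Int(R)`, and prime elements are absolutely irreducible.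
Conversely, a root `z ∉ R` of `F` has `a = z⁻¹ ∈ M` because `R` is a valuation ring, so
`a x - 1` divides `F` in `Int(R)`, and the irreducibility of `F` makes them associated. -/

theorem Prime.absolutelyIrreducible {α : Type*} [CommMonoidWithZero α] [IsCancelMulZero α]
    {p : α} (hp : Prime p) : AbsolutelyIrreducible p := by
  refine ⟨hp.irreducible, fun n _ l hl hprod => ?_⟩
  have hassoc : ∀ a ∈ l, Associated a p := by
    intro a ha
    obtain ⟨i, -, hi⟩ := (dvd_prime_pow hp n).1 (hprod ▸ Multiset.dvd_prod ha)
    obtain rfl : i = 1 := by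
      by_contra hi1
      exact not_irreducible_pow hi1 (hi.irreducible (hl a ha))
    simpa using hi
  refine ⟨?_, hassoc⟩
  have hmap : l.map Associates.mk = Multiset.replicate (Multiset.card l) (Associates.mk p) := by
    refine Multiset.eq_replicate.2 ⟨Multiset.card_map _ _, fun b hb => ?_⟩
    obtain ⟨a, ha, rfl⟩ := Multiset.mem_map.1 hb
    exact Associates.mk_eq_mk_iff_associated.2 (hassoc a ha)
  have hpow : Associates.mk p ^ Multiset.card l = Associates.mk p ^ n := by
    rw [← Multiset.prod_replicate, ← hmap, Associates.prod_mk, hprod, Associates.mk_pow]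
  have hp0 : Associates.mk p ≠ 0 := Associates.mk_ne_zero.2 hp.ne_zero
  have hpu : ¬IsUnit (Associates.mk p) := by
    rw [Associates.isUnit_mk]; exact hp.not_isUnit
  exact le_antisymm ((pow_dvd_pow_iff hp0 hpu).1 (dvd_of_eq hpow))
    ((pow_dvd_pow_iff hp0 hpu).1 (dvd_of_eq hpow.symm))

section IntPoly

open IsLocalRing

variable {R K : Type*} [CommRing R] [Field K] [Algebra R K]

theorem intPoly_dvd_of_dvd_of_eval_units {g F : intPoly R K}
    (hg : ∀ r : R, ∃ u : Rˣ, (g : K[X]).eval (algebraMap R K r) = algebraMap R K u)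
    (hdvd : (g : K[X]) ∣ F) : g ∣ F := by
  obtain ⟨H, hH⟩ := hdvd
  have hHmem : H ∈ intPoly R K := by
    intro r
    obtain ⟨u, hu⟩ := hg r
    obtain ⟨d, hd⟩ := F.2 r
    refine ⟨d * ↑u⁻¹, ?_⟩
    have hu0 : algebraMap R K u ≠ 0 := (u.isUnit.map (algebraMap R K)).ne_zero
    rw [map_mul, ← hd, hH, eval_mul, hu, mul_comm, ← mul_assoc, ← map_mul, Units.inv_mul,
      map_one, one_mul]
  exact ⟨⟨H, hHmem⟩, Subtype.ext hH⟩

theorem prime_intPoly_of_prime_of_eval_units {g : intPoly R K} (hprime : Prime (g : K[X]))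
    (hg : ∀ r : R, ∃ u : Rˣ, (g : K[X]).eval (algebraMap R K r) = algebraMap R K u) :
    Prime g := by
  refine ⟨fun h => hprime.ne_zero (congrArg Subtype.val h),
    fun hu => hprime.not_isUnit (hu.map (intPoly R K).subtype), fun p q hpq => ?_⟩
  have hpqK : (g : K[X]) ∣ (p : K[X]) * q := map_dvd (intPoly R K).subtype hpq
  exact (hprime.dvd_or_dvd hpqK).imp (intPoly_dvd_of_dvd_of_eval_units hg)
    (intPoly_dvd_of_dvd_of_eval_units hg)

theorem degree_eq_of_associated_intPoly {F G : intPoly R K} (h : Associated F G) :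
    (F : K[X]).degree = (G : K[X]).degree :=
  degree_eq_degree_of_associated (h.map (intPoly R K).subtype)

variable (K) in
noncomputable def linearIntPoly (a b : R) : intPoly R K :=
  ⟨(C a * X - C b).map (algebraMap R K), map_mem_intPoly R K _⟩

theorem coe_linearIntPoly (a b : R) :
    (linearIntPoly K a b : K[X]) = C (algebraMap R K a) * X - C (algebraMap R K b) := by
  simp [linearIntPoly]

theorem eval_linearIntPoly (a b r : R) :
    (linearIntPoly K a b : K[X]).eval (algebraMap R K r) = algebraMap R K (a * r - b) := by
  simp [coe_linearIntPoly]

theorem exists_unit_eval_linearIntPoly [IsLocalRing R] {a b : R} (ha : a ∈ maximalIdeal R)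
    (hb : b ∉ maximalIdeal R) (r : R) :
    ∃ u : Rˣ, (linearIntPoly K a b : K[X]).eval (algebraMap R K r) = algebraMap R K u := by
  have hunit : IsUnit (a * r - b) := by
    rw [← notMem_maximalIdeal]
    intro h
    exact hb (by simpa using sub_mem (Ideal.mul_mem_right r _ ha) h)
  exact ⟨hunit.unit, eval_linearIntPoly a b r⟩

theorem degree_linearIntPoly [IsFractionRing R K] {a : R} (ha0 : a ≠ 0) (b : R) :
    (linearIntPoly K a b : K[X]).degree = 1 := by
  rw [coe_linearIntPoly, sub_eq_add_neg, ← C_neg]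
  exact degree_linear ((map_ne_zero_iff _ (IsFractionRing.injective R K)).2 ha0)

theorem prime_linearIntPoly [IsLocalRing R] [IsFractionRing R K] {a b : R}
    (ha : a ∈ maximalIdeal R) (ha0 : a ≠ 0) (hb : b ∉ maximalIdeal R) :
    Prime (linearIntPoly K a b) :=
  prime_intPoly_of_prime_of_eval_units
    (irreducible_of_degree_eq_one (degree_linearIntPoly ha0 b)).prime
    (exists_unit_eval_linearIntPoly ha hb)

theorem exists_mem_maximalIdeal_mul_eq_one [IsDomain R] [ValuationRing R] [IsFractionRing R K]
    {z : K} (hz : z ∉ Set.range (algebraMap R K)) :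
    ∃ a ∈ maximalIdeal R, a ≠ 0 ∧ algebraMap R K a * z = 1 := by
  have hz0 : z ≠ 0 := fun h => hz ⟨0, by rw [h, map_zero]⟩
  obtain ⟨a, ha⟩ :=
    ((ValuationRing.iff_isInteger_or_isInteger R K).1 inferInstance z).resolve_left hz
  have hza : algebraMap R K a * z = 1 := by rw [ha, inv_mul_cancel₀ hz0]
  have ha0 : a ≠ 0 := by rintro rfl; simp at hza
  refine ⟨a, ?_, ha0, hza⟩
  rw [mem_maximalIdeal, mem_nonunits_iff]
  intro hunit
  exact hz ⟨↑hunit.unit⁻¹, by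
    rw [← mul_right_inj' (hunit.map (algebraMap R K)).ne_zero, ← map_mul, IsUnit.mul_val_inv,
      map_one, hza]⟩

end IntPoly

theorem statement3_general (R K : Type*) [CommRing R] [IsDomain R] [IsDiscreteValuationRing R]
    [Field K] [Algebra R K] [IsFractionRing R K] :
    (∀ a b : R, a ∈ IsLocalRing.maximalIdeal R → a ≠ 0 →
      b ∉ IsLocalRing.maximalIdeal R →
      AbsolutelyIrreducible
        (⟨(Polynomial.C a * Polynomial.X - Polynomial.C b).map (algebraMap R K),
          map_mem_intPoly R K _⟩ : intPoly R K)) ∧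
    (∀ (F : Polynomial K) (hF : F ∈ intPoly R K),
      AbsolutelyIrreducible (⟨F, hF⟩ : intPoly R K) →
      Polynomial.Splits F →
      (∃ z : K, F.IsRoot z ∧ z ∉ Set.range (algebraMap R K)) →
      (∃ a b : R, a ∈ IsLocalRing.maximalIdeal R ∧ b ∉ IsLocalRing.maximalIdeal R ∧
        Associated (⟨F, hF⟩ : intPoly R K)
          ⟨(Polynomial.C a * Polynomial.X - Polynomial.C b).map (algebraMap R K),
            map_mem_intPoly R K _⟩) ∧
      F.degree = 1) := by
  refine ⟨fun a b ha ha0 hb => (prime_linearIntPoly ha ha0 hb).absolutelyIrreducible, ?_⟩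
  rintro F hF habs - ⟨z, hzF, hzR⟩
  obtain ⟨a, ha, ha0, haz⟩ := exists_mem_maximalIdeal_mul_eq_one hzR
  have hb : (1 : R) ∉ IsLocalRing.maximalIdeal R := IsLocalRing.notMem_maximalIdeal.2 isUnit_one
  have hdvdK : (linearIntPoly K a 1 : K[X]) ∣ F := by
    rw [coe_linearIntPoly, map_one, ← haz, C_mul, ← mul_sub]
    have hCa : IsUnit (C (algebraMap R K a)) := isUnit_C.2 (IsUnit.of_mul_eq_one _ haz)
    exact hCa.mul_left_dvd.2 (dvd_iff_isRoot.2 hzF)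
  have hassoc : Associated (linearIntPoly K a 1) ⟨F, hF⟩ :=
    (prime_linearIntPoly ha ha0 hb).irreducible.associated_of_dvd habs.1
      (intPoly_dvd_of_dvd_of_eval_units (exists_unit_eval_linearIntPoly ha hb) hdvdK)
  exact ⟨⟨a, 1, ha, hb, hassoc.symm⟩,
    degree_eq_of_associated_intPoly hassoc ▸ degree_linearIntPoly ha0 1⟩

/-- (1) For `a ∈ M`, `a ≠ 0` and `b ∈ R ∖ M`, the polynomial `a·x - b`
is absolutely irreducible in `Int(R)`. (2) Every absolutely irreducible `F ∈ Int(R)`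
which splits over `K` and has a root in `K ∖ R` is associated in `Int(R)` to such a
polynomial `a·x - b` with `a ∈ M`, `b ∈ R ∖ M`; in particular `F` has degree `1`. -/
theorem statement3 (R K : Type*) [CommRing R] [IsDomain R] [IsDiscreteValuationRing R]
    [Finite (IsLocalRing.ResidueField R)]
    [Field K] [Algebra R K] [IsFractionRing R K] :
    (∀ a b : R, a ∈ IsLocalRing.maximalIdeal R → a ≠ 0 →
      b ∉ IsLocalRing.maximalIdeal R →
      AbsolutelyIrreducible
        (⟨(Polynomial.C a * Polynomial.X - Polynomial.C b).map (algebraMap R K),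
          map_mem_intPoly R K _⟩ : intPoly R K)) ∧
    (∀ (F : Polynomial K) (hF : F ∈ intPoly R K),
      AbsolutelyIrreducible (⟨F, hF⟩ : intPoly R K) →
      Polynomial.Splits F →
      (∃ z : K, F.IsRoot z ∧ z ∉ Set.range (algebraMap R K)) →
      (∃ a b : R, a ∈ IsLocalRing.maximalIdeal R ∧ b ∉ IsLocalRing.maximalIdeal R ∧
        Associated (⟨F, hF⟩ : intPoly R K)
          ⟨(Polynomial.C a * Polynomial.X - Polynomial.C b).map (algebraMap R K),
            map_mem_intPoly R K _⟩) ∧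
      F.degree = 1) :=
  statement3_general R K
end

section
/- Let R be a discrete valuation domain with finite residue field of order q, and let F ∈ Int(R) be a polynomial that splits into linear factors over the quotient field of R and whose set of roots S is contained in R. If F is absolutely irreducible in Int(R), then |S| ≡ 1 (mod q−1). -/
open Polynomial

/-!
Write `F = u ϖ^z ∏_{s ∈ S} (X - s)^{m s}` with `u` a unit and `ϖ` a uniformizer. For any
multiplicity vector `μ`, let `w(μ) = min_{r ∉ S} ∑ μ s · v(r - s)` be the valuation of the fixed
divisor of `∏ (X - s)^{μ s}`; then `u ϖ^z ∏ (X - s)^{μ s}` is integer-valued iff `z + w(μ) ≥ 0`,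
and irreducibility of `F` forces `z = -w(m)`. Consequently, whenever `μ + ν = N m` and
`w(μ) + w(ν) ≥ N w(m)`, the power `F^N` splits in Int(R) into factors with root multiplicities `μ`
and `ν`, and absolute irreducibility makes `μ` proportional to `m`: `m` is *rigid*.

Rigidity alone gives the congruence. For `|S| ≥ 2` it forces `w(m) > 0`, so `S` meets every one of
the `q` residue classes; and it is inherited by each class `a + ϖR`, rescaled to
`{t | a + ϖ t ∈ S}`. By induction each class contains `≡ 1 (mod q - 1)` points of `S`, so
`|S| ≡ q ≡ 1`.
-/

open IsLocalRing

namespace IsDiscreteValuationRing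

variable (R : Type*) [CommRing R] [IsDomain R] [IsDiscreteValuationRing R]

noncomputable def uniformizer : R := (exists_irreducible R).choose

theorem irreducible_uniformizer : Irreducible (uniformizer R) := (exists_irreducible R).choose_spec

instance : Infinite R := by
  by_contra h
  have : Finite R := not_infinite_iff_finite.mp h
  exact not_isField R (Finite.isField_of_domain R)

variable {R}

theorem uniformizer_dvd_iff {x : R} : uniformizer R ∣ x ↔ ¬IsUnit x := by
  rw [← mem_nonunits_iff, ← mem_maximalIdeal, (irreducible_uniformizer R).maximalIdeal_eq,
    Ideal.mem_span_singleton]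

theorem uniformizer_dvd_sub_iff {r s : R} :
    uniformizer R ∣ r - s ↔ residue R r = residue R s := by
  rw [← sub_eq_zero, ← map_sub, residue_eq_zero_iff, (irreducible_uniformizer R).maximalIdeal_eq,
    Ideal.mem_span_singleton]

theorem multiplicity_sub_eq_zero_of_residue_ne {r s : R} (h : residue R r ≠ residue R s) :
    multiplicity (uniformizer R) (r - s) = 0 :=
  multiplicity_eq_zero.mpr (uniformizer_dvd_sub_iff.not.mpr h)

theorem multiplicity_uniformizer_mul {x : R} (hx : x ≠ 0) :
    multiplicity (uniformizer R) (uniformizer R * x) = multiplicity (uniformizer R) x + 1 := by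
  have hϖ := irreducible_uniformizer R
  rw [multiplicity_mul hϖ.prime (FiniteMultiplicity.of_not_isUnit hϖ.not_isUnit
    (mul_ne_zero hϖ.ne_zero hx)), multiplicity_self, add_comm]

noncomputable def zoom (a t : R) : R := a + uniformizer R * t

theorem zoom_injective (a : R) : Function.Injective (zoom a) :=
  (add_right_injective a).comp (mul_right_injective₀ (irreducible_uniformizer R).ne_zero)

theorem mem_range_zoom {a r : R} : r ∈ Set.range (zoom a) ↔ residue R r = residue R a := by
  rw [← uniformizer_dvd_sub_iff]
  exact ⟨fun ⟨t, ht⟩ => ⟨t, by rw [← ht, zoom]; ring⟩, fun ⟨t, ht⟩ => ⟨t, by rw [zoom, ← ht]; ring⟩⟩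

theorem exists_residue_eq_notMem (a : R) (T : Finset R) :
    ∃ r, residue R r = residue R a ∧ r ∉ T := by
  obtain ⟨t, ht⟩ := Infinite.exists_notMem_finset (T.preimage _ (zoom_injective a).injOn)
  exact ⟨zoom a t, mem_range_zoom.mp ⟨t, rfl⟩, by simpa using ht⟩

end IsDiscreteValuationRing

open IsDiscreteValuationRing

section FixedDivisor

variable {R : Type*} [CommRing R] [IsDomain R] [IsDiscreteValuationRing R]

noncomputable def splitVal (S : Finset R) (μ : R → ℕ) (r : R) : ℕ :=
  ∑ s ∈ S, μ s * multiplicity (uniformizer R) (r - s)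

/-- The valuation of the fixed divisor of `∏ s ∈ S, (X - s) ^ μ s`. Minimizing over `r ∉ S` only
loses nothing, by `fixDivVal_le_splitVal`. -/
noncomputable def fixDivVal (S : Finset R) (μ : R → ℕ) : ℕ :=
  sInf (splitVal S μ '' (S : Set R)ᶜ)

variable {S : Finset R} {μ : R → ℕ}

theorem exists_splitVal_eq_fixDivVal (S : Finset R) (μ : R → ℕ) :
    ∃ r ∉ S, splitVal S μ r = fixDivVal S μ := by
  obtain ⟨r, -, hr⟩ := exists_residue_eq_notMem (0 : R) S
  exact Nat.sInf_mem (s := splitVal S μ '' (S : Set R)ᶜ) ⟨_, r, hr, rfl⟩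

theorem fixDivVal_le {r : R} (hr : r ∉ S) : fixDivVal S μ ≤ splitVal S μ r :=
  Nat.sInf_le ⟨r, hr, rfl⟩

theorem le_fixDivVal {c : ℕ} (h : ∀ r ∉ S, c ≤ splitVal S μ r) : c ≤ fixDivVal S μ := by
  obtain ⟨r, hr, hrμ⟩ := exists_splitVal_eq_fixDivVal S μ
  exact hrμ ▸ h r hr

theorem multiplicity_prod_sub_pow {r : R} (h : ∏ s ∈ S, (r - s) ^ μ s ≠ 0) :
    multiplicity (uniformizer R) (∏ s ∈ S, (r - s) ^ μ s) = splitVal S μ r := by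
  have hϖ := irreducible_uniformizer R
  have hfin {x : R} (hx : x ≠ 0) := FiniteMultiplicity.of_not_isUnit hϖ.not_isUnit hx
  refine ENat.natCast_inj.mp ?_
  rw [← (hfin h).emultiplicity_eq_multiplicity, Finset.emultiplicity_prod hϖ.prime, splitVal,
    Nat.cast_sum]
  refine Finset.sum_congr rfl fun s hs => ?_
  rw [emultiplicity_pow hϖ.prime]
  rcases eq_or_ne (μ s) 0 with hμ | hμ
  · simp [hμ]
  · rw [(hfin (ne_zero_pow hμ (Finset.prod_ne_zero_iff.mp h s hs))).emultiplicity_eq_multiplicity]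
    norm_cast

theorem fixDivVal_le_splitVal {r : R} (h : ∏ s ∈ S, (r - s) ^ μ s ≠ 0) :
    fixDivVal S μ ≤ splitVal S μ r := by
  by_cases hr : r ∉ S
  · exact fixDivVal_le hr
  have hϖ := irreducible_uniformizer R
  set ϖ := uniformizer R
  -- moving `r` by a high power of `ϖ` leaves `S` but changes no `v(r - s)` with `s ≠ r`
  set M := ∑ s ∈ S, multiplicity ϖ (r - s) + 1
  have hshift (s : R) : r + ϖ ^ M - s = (r - s) + ϖ ^ M := by ring
  have hkeep : ∀ s ∈ S, s ≠ r →
      r + ϖ ^ M - s ≠ 0 ∧ multiplicity ϖ (r + ϖ ^ M - s) = multiplicity ϖ (r - s) := by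
    intro s hs hsr
    have hlt : multiplicity ϖ (r - s) < M :=
      Nat.lt_add_one_of_le (Finset.single_le_sum (f := fun s => multiplicity ϖ (r - s))
        (fun _ _ => Nat.zero_le _) hs)
    have hnd : ¬ϖ ^ (multiplicity ϖ (r - s) + 1) ∣ r + ϖ ^ M - s := by
      rw [hshift, dvd_add_left (pow_dvd_pow _ hlt)]
      exact (FiniteMultiplicity.of_not_isUnit hϖ.not_isUnit (sub_ne_zero.mpr hsr.symm)
        ).not_pow_dvd_of_multiplicity_lt (lt_add_one _)
    refine ⟨fun h0 => hnd (h0 ▸ dvd_zero _), multiplicity_eq_of_dvd_of_not_dvd ?_ hnd⟩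
    rw [hshift]
    exact dvd_add (pow_multiplicity_dvd _ _) (pow_dvd_pow _ hlt.le)
  have hμr : μ r = 0 := by
    by_contra hμ
    exact h (Finset.prod_eq_zero (not_not.mp hr) (by simp [hμ]))
  have hout : r + ϖ ^ M ∉ S := fun hmem => by
    by_cases heq : r + ϖ ^ M = r
    · exact pow_ne_zero M hϖ.ne_zero (by simpa using heq)
    · exact (hkeep _ hmem heq).1 (sub_self _)
  refine (fixDivVal_le hout).trans_eq (Finset.sum_congr rfl fun s hs => ?_)
  rcases eq_or_ne s r with rfl | hsr
  · simp [hμr]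
  · rw [(hkeep s hs hsr).2]

theorem splitVal_congr {ν : R → ℕ} {r : R}
    (h : ∀ s ∈ S, residue R s = residue R r → μ s = ν s) : splitVal S μ r = splitVal S ν r := by
  refine Finset.sum_congr rfl fun s hs => ?_
  by_cases hrs : residue R s = residue R r
  · rw [h s hs hrs]
  · rw [multiplicity_sub_eq_zero_of_residue_ne (Ne.symm hrs), mul_zero, mul_zero]

theorem splitVal_smul (c : ℕ) (r : R) : splitVal S (c • μ) r = c * splitVal S μ r := by
  simp only [splitVal, Finset.mul_sum, Pi.smul_apply, smul_eq_mul, mul_assoc]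

noncomputable def zoomSet (S : Finset R) (a : R) : Finset R :=
  S.preimage (zoom a) (zoom_injective a).injOn

@[simp]
theorem mem_zoomSet {a t : R} : t ∈ zoomSet S a ↔ zoom a t ∈ S := Finset.mem_preimage

theorem splitVal_zoom {a r : R} (hr : r ∉ zoomSet S a) :
    splitVal S μ (zoom a r) =
      ∑ t ∈ zoomSet S a, μ (zoom a t) + splitVal (zoomSet S a) (μ ∘ zoom a) r := by
  have hfar : ∀ s ∈ S, s ∉ Set.range (zoom a) →
      μ s * multiplicity (uniformizer R) (zoom a r - s) = 0 := fun s _ hs => by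
    rw [mem_range_zoom, ← (mem_range_zoom (a := a)).mp ⟨r, rfl⟩] at hs
    rw [multiplicity_sub_eq_zero_of_residue_ne (Ne.symm hs), mul_zero]
  rw [splitVal, ← Finset.sum_preimage _ _ (zoom_injective a).injOn _ hfar, splitVal,
    ← Finset.sum_add_distrib]
  refine Finset.sum_congr rfl fun t ht => ?_
  have hrt : r - t ≠ 0 := sub_ne_zero.mpr (ne_of_mem_of_not_mem ht hr).symm
  rw [show zoom a r - zoom a t = uniformizer R * (r - t) by simp only [zoom]; ring,
    multiplicity_uniformizer_mul hrt, Function.comp_apply]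
  ring

theorem fixDivVal_le_zoom (μ : R → ℕ) (a : R) :
    fixDivVal S μ ≤ ∑ t ∈ zoomSet S a, μ (zoom a t) + fixDivVal (zoomSet S a) (μ ∘ zoom a) := by
  obtain ⟨r, hr, hrμ⟩ := exists_splitVal_eq_fixDivVal (zoomSet S a) (μ ∘ zoom a)
  rw [← hrμ, ← splitVal_zoom hr]
  exact fixDivVal_le (mt mem_zoomSet.mpr hr)

theorem min_le_fixDivVal_extend {m : R → ℕ} (a : R) (c d : ℕ) (ν : R → ℕ) :
    min (c * (∑ t ∈ zoomSet S a, ν t + fixDivVal (zoomSet S a) ν)) (d * fixDivVal S m) ≤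
      fixDivVal S (Function.extend (zoom a) (c • ν) (d • m)) := by
  refine le_fixDivVal fun r hr => ?_
  by_cases hra : residue R r = residue R a
  · obtain ⟨t, rfl⟩ := mem_range_zoom.mpr hra
    have ht : t ∉ zoomSet S a := mt mem_zoomSet.mp hr
    rw [splitVal_zoom ht, Function.extend_comp (zoom_injective a), splitVal_smul]
    simp only [(zoom_injective a).extend_apply, Pi.smul_apply, smul_eq_mul, ← Finset.mul_sum,
      ← mul_add]
    exact (min_le_left _ _).trans (Nat.mul_le_mul_left c (by grw [fixDivVal_le ht]))
  · rw [splitVal_congr (ν := d • m) fun s _ hs =>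
      Function.extend_apply' _ _ _ (by rwa [← Set.mem_range, mem_range_zoom, hs]), splitVal_smul]
    exact (min_le_right _ _).trans (Nat.mul_le_mul_left d (fixDivVal_le hr))

end FixedDivisor

section Rigid

variable {R : Type*} [CommRing R] [IsDomain R] [IsDiscreteValuationRing R]

def IsRigid (S : Finset R) (m : R → ℕ) : Prop :=
  ∀ (N : ℕ) (μ ν : R → ℕ), (∀ s ∈ S, μ s + ν s = N * m s) →
    N * fixDivVal S m ≤ fixDivVal S μ + fixDivVal S ν →
    ∀ s ∈ S, ∀ s' ∈ S, μ s * m s' = μ s' * m s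

variable {S : Finset R} {m : R → ℕ}

theorem IsRigid.fixDivVal_pos (h : IsRigid S m) (hm : ∀ s ∈ S, 0 < m s) (hS : 1 < S.card) :
    0 < fixDivVal S m := by
  classical
  obtain ⟨s₀, hs₀, s₁, hs₁, hne⟩ := Finset.one_lt_card.mp hS
  by_contra h0
  -- with `fixDivVal S m = 0` the valuation condition is void, so `m = δ + (m - δ)` must be
  -- a proportional splitting
  let δ : R → ℕ := Pi.single s₀ 1
  have hsum : ∀ s ∈ S, δ s + (m s - δ s) = 1 * m s := by
    intro s hs
    have := hm s hs
    rcases eq_or_ne s s₀ with rfl | hs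
    · simp only [δ, Pi.single_eq_same]
      omega
    · simp [δ, hs]
  have := h 1 _ _ hsum (by omega) s₀ hs₀ s₁ hs₁
  simp [δ, hne.symm, (hm s₁ hs₁).ne'] at this

theorem exists_mem_residue_eq_of_fixDivVal_pos (hk : 0 < fixDivVal S m) (a : R) :
    ∃ s ∈ S, residue R s = residue R a := by
  by_contra! hS
  obtain ⟨r, hra, hr⟩ := exists_residue_eq_notMem a S
  have : splitVal S m r = splitVal S 0 r :=
    splitVal_congr fun s hs hsr => absurd (hsr.trans hra) (hS s hs)
  have h0 : fixDivVal S m ≤ 0 := (fixDivVal_le hr).trans_eq (this.trans (by simp [splitVal]))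
  omega

theorem isRigid_zoomSet (h : IsRigid S m) (a : R) : IsRigid (zoomSet S a) (m ∘ zoom a) := by
  intro n ν₁ ν₂ hsum hle t ht t' ht'
  have hνsum : ∑ u ∈ zoomSet S a, ν₁ u + ∑ u ∈ zoomSet S a, ν₂ u =
      n * ∑ u ∈ zoomSet S a, m (zoom a u) := by
    rw [← Finset.sum_add_distrib, Finset.mul_sum]
    exact Finset.sum_congr rfl hsum
  have hm := Nat.mul_le_mul_left n (fixDivVal_le_zoom (S := S) m a)
  set T := zoomSet S a
  set e₁ := ∑ u ∈ T, ν₁ u + fixDivVal T ν₁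
  set e₂ := ∑ u ∈ T, ν₂ u + fixDivVal T ν₂
  have he : n * fixDivVal S m ≤ e₁ + e₂ := by
    rw [mul_add] at hm
    omega
  -- transport `νᵢ` to the residue class of `a` and fill the other classes with multiples of `m`,
  -- scaled so that `μ₁ + μ₂ = n (e₁ + e₂) m` and `fixDivVal S μᵢ ≥ n eᵢ fixDivVal S m`
  set μ₁ := Function.extend (zoom a) ((e₁ + e₂) • ν₁) ((n * e₁) • m)
  set μ₂ := Function.extend (zoom a) ((e₁ + e₂) • ν₂) ((n * e₂) • m)
  have hμ₁ : n * fixDivVal S m * e₁ ≤ fixDivVal S μ₁ :=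
    (le_min (Nat.mul_le_mul_right e₁ he) (by rw [mul_right_comm])).trans
      (min_le_fixDivVal_extend a _ _ ν₁)
  have hμ₂ : n * fixDivVal S m * e₂ ≤ fixDivVal S μ₂ :=
    (le_min (Nat.mul_le_mul_right e₂ he) (by rw [mul_right_comm])).trans
      (min_le_fixDivVal_extend a _ _ ν₂)
  have hsplit : ∀ s ∈ S, μ₁ s + μ₂ s = n * (e₁ + e₂) * m s := by
    intro s hs
    by_cases hsa : s ∈ Set.range (zoom a)
    · obtain ⟨u, rfl⟩ := hsa
      simp only [μ₁, μ₂, (zoom_injective a).extend_apply, Pi.smul_apply, smul_eq_mul, ← mul_add,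
        hsum u (mem_zoomSet.mpr hs), Function.comp_apply]
      ring
    · simp only [μ₁, μ₂, Function.extend_apply' _ _ _ hsa, Pi.smul_apply, smul_eq_mul]
      ring
  have key := h _ μ₁ μ₂ hsplit (by nlinarith) _ (mem_zoomSet.mp ht) _ (mem_zoomSet.mp ht')
  simp only [μ₁, (zoom_injective a).extend_apply, Pi.smul_apply, smul_eq_mul, mul_assoc] at key
  rcases Nat.eq_zero_or_pos (e₁ + e₂) with h0 | hpos
  · have hν₁ : ∀ u ∈ T, ν₁ u = 0 := Finset.sum_eq_zero_iff.mp (by omega)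
    simp [hν₁ t ht, hν₁ t' ht']
  · exact Nat.eq_of_mul_eq_mul_left hpos key

theorem Finset.card_modEq_of_card_fiber_modEq_one {α ι : Type*} [Finite ι] [DecidableEq ι]
    (f : α → ι) (S : Finset α) {n : ℕ} (h : ∀ i, (S.filter (f · = i)).card ≡ 1 [MOD n]) :
    S.card ≡ Nat.card ι [MOD n] := by
  have := Fintype.ofFinite ι
  rw [← ZMod.natCast_eq_natCast_iff, Finset.card_eq_sum_card_fiberwise
    (fun x _ => Finset.mem_univ (f x)), Nat.cast_sum, Nat.card_eq_fintype_card]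
  simp [(ZMod.natCast_eq_natCast_iff _ _ _).mpr (h _)]

theorem IsRigid.card_modEq_one [Finite (ResidueField R)] (h : IsRigid S m) (hS : S.Nonempty)
    (hm : ∀ s ∈ S, 0 < m s) : S.card ≡ 1 [MOD Nat.card (ResidueField R) - 1] := by
  classical
  induction hn : S.card using Nat.strong_induction_on generalizing S m with
  | _ n ih =>
  obtain hS1 | hS1 := (Nat.one_le_iff_ne_zero.mpr hS.card_pos.ne').eq_or_lt
  · rw [← hn, ← hS1]
  have hk := h.fixDivVal_pos hm hS1
  have hfiber (a : R) :
      (S.filter (residue R · = residue R a)).card ≡ 1 [MOD Nat.card (ResidueField R) - 1] := by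
    have hcard : (zoomSet S a).card = (S.filter (residue R · = residue R a)).card := by
      simp_rw [zoomSet, Finset.card_preimage, mem_range_zoom]
    obtain ⟨b, hb⟩ := exists_ne (residue R a)
    obtain ⟨b, rfl⟩ := residue_surjective b
    obtain ⟨s', hs', hs'b⟩ := exists_mem_residue_eq_of_fixDivVal_pos hk b
    obtain ⟨s, hs, hsa⟩ := exists_mem_residue_eq_of_fixDivVal_pos hk a
    obtain ⟨t, rfl⟩ := mem_range_zoom.mpr hsa
    rw [← hcard]
    refine ih _ ?_ (isRigid_zoomSet h a) ⟨t, mem_zoomSet.mpr hs⟩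
      (fun u hu => hm _ (mem_zoomSet.mp hu)) rfl
    rw [hcard, ← hn]
    exact Finset.card_lt_card (Finset.filter_ssubset.mpr ⟨s', hs', by rwa [hs'b]⟩)
  rw [← hn]
  refine (Finset.card_modEq_of_card_fiber_modEq_one (residue R) S fun b => ?_).trans
    (Nat.modEq_sub Nat.card_pos)
  obtain ⟨a, rfl⟩ := residue_surjective b
  exact hfiber a

end Rigid

section SplitPoly

variable {R K : Type*} [CommRing R] [Field K] [Algebra R K] {S : Finset R} {μ : R → ℕ}

variable (K) in
noncomputable def splitPoly (c : K) (S : Finset R) (μ : R → ℕ) : K[X] :=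
  C c * ∏ s ∈ S, (X - C (algebraMap R K s)) ^ μ s

theorem eval_splitPoly (c : K) (r : R) :
    (splitPoly K c S μ).eval (algebraMap R K r) =
      c * algebraMap R K (∏ s ∈ S, (r - s) ^ μ s) := by
  simp [splitPoly, eval_prod]

theorem splitPoly_mul (c c' : K) (ν : R → ℕ) :
    splitPoly K c S μ * splitPoly K c' S ν = splitPoly K (c * c') S (μ + ν) := by
  simp only [splitPoly, C_mul, Pi.add_apply, pow_add, Finset.prod_mul_distrib]
  ring

theorem splitPoly_pow (c : K) (N : ℕ) :
    splitPoly K c S μ ^ N = splitPoly K (c ^ N) S (N • μ) := by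
  simp only [splitPoly, mul_pow, C_pow, ← Finset.prod_pow, ← pow_mul, Pi.smul_apply, smul_eq_mul,
    mul_comm N]

theorem splitPoly_congr (c : K) {ν : R → ℕ} (h : ∀ s ∈ S, μ s = ν s) :
    splitPoly K c S μ = splitPoly K c S ν := by
  simp only [splitPoly, Finset.prod_congr rfl fun s hs => congrArg _ (h s hs)]

theorem natDegree_splitPoly {c : K} (hc : c ≠ 0) :
    (splitPoly K c S μ).natDegree = ∑ s ∈ S, μ s := by
  rw [splitPoly, natDegree_C_mul hc,
    natDegree_prod _ _ fun s _ => pow_ne_zero _ (X_sub_C_ne_zero _)]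
  simp

theorem rootMultiplicity_splitPoly [IsFractionRing R K] {c : K} (hc : c ≠ 0) {s : R}
    (hs : s ∈ S) : (splitPoly K c S μ).rootMultiplicity (algebraMap R K s) = μ s := by
  classical
  rw [← count_roots, splitPoly, roots_C_mul _ hc, roots_prod _ _
    (Finset.prod_ne_zero_iff.mpr fun s _ => pow_ne_zero _ (X_sub_C_ne_zero _)), Multiset.count_bind]
  simp [Multiset.count_singleton, (IsFractionRing.injective R K).eq_iff, hs]

theorem eq_splitPoly_of_splits [IsFractionRing R K] {F : K[X]} (hsplit : F.Splits) (hF0 : F ≠ 0)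
    (hroots : ∀ z : K, F.IsRoot z ↔ ∃ s ∈ S, algebraMap R K s = z) :
    F = splitPoly K F.leadingCoeff S fun s => F.rootMultiplicity (algebraMap R K s) := by
  classical
  have hS : F.roots.toFinset = S.image (algebraMap R K) := by
    ext z
    rw [Multiset.mem_toFinset, mem_roots hF0, hroots, Finset.mem_image]
  conv_lhs => rw [hsplit.eq_prod_roots, Finset.prod_multiset_map_count, hS,
    Finset.prod_image (IsFractionRing.injective R K).injOn]
  simp [splitPoly, count_roots]

theorem eq_mul_of_associated_splitPoly_pow [IsFractionRing R K] {c c' : K} (hc : c ≠ 0)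
    (hc' : c' ≠ 0) {m : R → ℕ} {t : ℕ}
    (h : Associated (splitPoly K c S μ) (splitPoly K c' S m ^ t)) {s : R} (hs : s ∈ S) :
    μ s = t * m s := by
  classical
  have := congrArg (Multiset.count (algebraMap R K s)) h.roots_eq
  rwa [roots_pow, Multiset.count_nsmul, count_roots, count_roots,
    rootMultiplicity_splitPoly hc hs, rootMultiplicity_splitPoly hc' hs] at this

end SplitPoly

section IntegralValues

variable {R K : Type*} [CommRing R] [IsDomain R] [IsDiscreteValuationRing R] [Field K]
  [Algebra R K] [IsFractionRing R K]

theorem algebraMap_uniformizer_ne_zero : algebraMap R K (uniformizer R) ≠ 0 :=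
  (map_ne_zero_iff _ (IsFractionRing.injective R K)).mpr (irreducible_uniformizer R).ne_zero

theorem algebraMap_unit_mul_zpow_ne_zero (u : Rˣ) (z : ℤ) :
    algebraMap R K u * algebraMap R K (uniformizer R) ^ z ≠ 0 :=
  mul_ne_zero ((map_ne_zero_iff _ (IsFractionRing.injective R K)).mpr u.ne_zero)
    (zpow_ne_zero _ algebraMap_uniformizer_ne_zero)

theorem exists_algebraMap_eq_unit_mul_zpow_iff (u : Rˣ) (e : ℤ) :
    (∃ a : R, algebraMap R K u * algebraMap R K (uniformizer R) ^ e = algebraMap R K a) ↔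
      0 ≤ e := by
  have hϖ := irreducible_uniformizer R
  refine ⟨fun ⟨a, ha⟩ => ?_, fun he => ?_⟩
  · by_contra! he
    obtain ⟨n, rfl⟩ : ∃ n : ℕ, e = -(n + 1 : ℕ) := ⟨(-e - 1).toNat, by omega⟩
    have hu : (u : R) = a * uniformizer R ^ (n + 1) := IsFractionRing.injective R K <| by
      rw [map_mul, map_pow, ← ha, zpow_neg, zpow_natCast, inv_mul_cancel_right₀
        (pow_ne_zero _ algebraMap_uniformizer_ne_zero)]
    exact hϖ.not_isUnit (isUnit_of_dvd_unit (hu ▸ (dvd_pow_self _ n.succ_ne_zero).mul_left a)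
      u.isUnit)
  · lift e to ℕ using he
    exact ⟨u * uniformizer R ^ e, by simp⟩

theorem exists_algebraMap_eq_unit_mul_zpow_mul_iff (u : Rˣ) (z : ℤ) {x : R} (hx : x ≠ 0) :
    (∃ a : R, algebraMap R K u * algebraMap R K (uniformizer R) ^ z * algebraMap R K x =
      algebraMap R K a) ↔ 0 ≤ z + multiplicity (uniformizer R) x := by
  have hϖ := irreducible_uniformizer R
  obtain ⟨n, w, rfl⟩ := eq_unit_mul_pow_irreducible hx hϖ
  rw [multiplicity_eq_of_associated_right (associated_unit_mul_left _ _ w.isUnit),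
    multiplicity_pow_self_of_prime hϖ.prime,
    ← exists_algebraMap_eq_unit_mul_zpow_iff (K := K) (u * w)]
  simp only [map_mul, map_pow, Units.val_mul,
    zpow_add₀ (algebraMap_uniformizer_ne_zero (R := R) (K := K)), zpow_natCast]
  ring_nf

theorem splitPoly_mem_intPoly_iff (u : Rˣ) (z : ℤ) (S : Finset R) (μ : R → ℕ) :
    splitPoly K (algebraMap R K u * algebraMap R K (uniformizer R) ^ z) S μ ∈ intPoly R K ↔
      0 ≤ z + fixDivVal S μ := by
  refine ⟨fun hmem => ?_, fun hz r => ?_⟩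
  · obtain ⟨r, hr, hrμ⟩ := exists_splitVal_eq_fixDivVal S μ
    have hP : ∏ s ∈ S, (r - s) ^ μ s ≠ 0 := Finset.prod_ne_zero_iff.mpr fun s hs =>
      pow_ne_zero _ (sub_ne_zero.mpr (ne_of_mem_of_not_mem hs hr).symm)
    rw [← hrμ, ← multiplicity_prod_sub_pow hP,
      ← exists_algebraMap_eq_unit_mul_zpow_mul_iff (K := K) u z hP]
    simpa only [eval_splitPoly, mul_assoc] using hmem r
  · by_cases hP : ∏ s ∈ S, (r - s) ^ μ s = 0
    · exact ⟨0, by simp [eval_splitPoly, hP]⟩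
    · have hle := fixDivVal_le_splitVal hP
      rw [← multiplicity_prod_sub_pow hP] at hle
      simpa only [eval_splitPoly, mul_assoc] using
        (exists_algebraMap_eq_unit_mul_zpow_mul_iff (K := K) u z hP).mpr (by omega)

end IntegralValues

theorem AbsolutelyIrreducible.associated_pow_of_mul_eq_pow {α : Type*} [CommMonoidWithZero α]
    [NoZeroDivisors α] [WfDvdMonoid α] {d G H : α} (hd : AbsolutelyIrreducible d) {N : ℕ}
    (hG : ¬IsUnit G) (hH : ¬IsUnit H) (hGH : G * H = d ^ N) : ∃ t, Associated G (d ^ t) := by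
  have hN : N ≠ 0 := by
    rintro rfl
    exact hG (.of_mul_eq_one _ (by rwa [pow_zero] at hGH))
  have hGH0 : G * H ≠ 0 := hGH ▸ pow_ne_zero _ hd.1.ne_zero
  obtain ⟨lG, hlG, rfl, -⟩ :=
    (WfDvdMonoid.not_isUnit_iff_exists_factors_eq G (left_ne_zero_of_mul hGH0)).mp hG
  obtain ⟨lH, hlH, rfl, -⟩ :=
    (WfDvdMonoid.not_isUnit_iff_exists_factors_eq _ (right_ne_zero_of_mul hGH0)).mp hH
  obtain ⟨-, hassoc⟩ := hd.2 N (Nat.one_le_iff_ne_zero.mpr hN) (lG + lH)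
    (fun x hx => (Multiset.mem_add.mp hx).elim (hlG x) (hlH x)) (by rw [Multiset.prod_add, hGH])
  refine ⟨Multiset.card lG, ?_⟩
  rw [← Associates.mk_eq_mk_iff_associated, ← Associates.prod_mk, Associates.mk_pow,
    Multiset.map_congr rfl fun x hx => Associates.mk_eq_mk_iff_associated.mpr
      (hassoc x (Multiset.mem_add.mpr (Or.inl hx))), Multiset.map_const', Multiset.prod_replicate]

namespace intPoly

variable {R K : Type*} [CommRing R] [Field K] [Algebra R K]

theorem isUnit_of_eval_eq_of_isUnit [IsFractionRing R K] {G : intPoly R K} (hG : IsUnit G) {r a : R}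
    (h : (G : K[X]).eval (algebraMap R K r) = algebraMap R K a) : IsUnit a := by
  obtain ⟨V, hV⟩ := hG.exists_right_inv
  obtain ⟨b, hb⟩ := V.2 r
  refine .of_mul_eq_one b (IsFractionRing.injective R K ?_)
  rw [map_mul, ← h, ← hb, ← eval_mul, ← Subring.coe_mul, hV, Subring.coe_one, eval_one, map_one]

theorem not_isUnit_of_natDegree_pos {G : intPoly R K} (h : 0 < (G : K[X]).natDegree) :
    ¬IsUnit G :=
  fun hG => h.ne' (natDegree_eq_zero_of_isUnit (hG.map (intPoly R K).subtype))

theorem not_isUnit_splitPoly {c : K} (hc : c ≠ 0) {S : Finset R} {μ : R → ℕ} {s : R} (hs : s ∈ S)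
    (hμ : μ s ≠ 0) (hmem : splitPoly K c S μ ∈ intPoly R K) : ¬IsUnit (⟨_, hmem⟩ : intPoly R K) :=
  not_isUnit_of_natDegree_pos <| by
    rw [natDegree_splitPoly hc]
    exact (Nat.pos_of_ne_zero hμ).trans_le (Finset.single_le_sum (fun _ _ => Nat.zero_le _) hs)

variable [IsDomain R] [IsDiscreteValuationRing R]

noncomputable def minVal (G : intPoly R K) : ℕ :=
  sInf {n | ∃ r a, (G : K[X]).eval (algebraMap R K r) = algebraMap R K a ∧ a ≠ 0 ∧
    multiplicity (uniformizer R) a = n}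

theorem minVal_le {G : intPoly R K} {r a : R}
    (h : (G : K[X]).eval (algebraMap R K r) = algebraMap R K a) (ha : a ≠ 0) :
    minVal G ≤ multiplicity (uniformizer R) a :=
  Nat.sInf_le ⟨r, a, h, ha, rfl⟩

variable [IsFractionRing R K]

theorem exists_minVal {G : intPoly R K} (hG : G ≠ 0) : ∃ r a,
    (G : K[X]).eval (algebraMap R K r) = algebraMap R K a ∧ a ≠ 0 ∧
      multiplicity (uniformizer R) a = minVal G := by
  classical
  have hG' : (G : K[X]) ≠ 0 := by simpa using hG
  obtain ⟨r, hr⟩ := Infinite.exists_notMem_finset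
    ((G : K[X]).roots.toFinset.preimage (algebraMap R K) (IsFractionRing.injective R K).injOn)
  obtain ⟨a, ha⟩ := G.2 r
  have ha0 : a ≠ 0 := by
    rintro rfl
    exact hr (by simpa [mem_roots hG'] using ha)
  exact Nat.sInf_mem (s := {n | ∃ r a, (G : K[X]).eval (algebraMap R K r) = algebraMap R K a ∧
    a ≠ 0 ∧ multiplicity (uniformizer R) a = n}) ⟨_, r, a, ha, ha0, rfl⟩

theorem minVal_add_minVal_le {A B : intPoly R K} (hAB : A * B ≠ 0) :
    minVal A + minVal B ≤ minVal (A * B) := by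
  obtain ⟨r, c, hc, hc0, hcv⟩ := exists_minVal hAB
  obtain ⟨a, ha⟩ := A.2 r
  obtain ⟨b, hb⟩ := B.2 r
  obtain rfl : c = a * b := IsFractionRing.injective R K (by
    rw [← hc, map_mul, ← ha, ← hb, Subring.coe_mul, eval_mul])
  have hϖ := irreducible_uniformizer R
  rw [← hcv, multiplicity_mul hϖ.prime (FiniteMultiplicity.of_not_isUnit hϖ.not_isUnit hc0)]
  exact add_le_add (minVal_le ha (left_ne_zero_of_mul hc0))
    (minVal_le hb (right_ne_zero_of_mul hc0))

theorem isUnit_of_natDegree_eq_zero_of_minVal_eq_zero {G : intPoly R K} (hG : G ≠ 0)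
    (hd : (G : K[X]).natDegree = 0) (hv : minVal G = 0) : IsUnit G := by
  obtain ⟨r, a, ha, -, hav⟩ := exists_minVal hG
  rw [hv, multiplicity_eq_zero, uniformizer_dvd_iff, not_not] at hav
  obtain ⟨c, hc⟩ := natDegree_eq_zero.mp hd
  rw [← hc, eval_C] at ha
  refine .of_mul_eq_one ⟨C (algebraMap R K ↑hav.unit⁻¹), fun _ => ⟨_, eval_C⟩⟩
    (Subtype.ext ?_)
  have ha0 : algebraMap R K a ≠ 0 :=
    (map_ne_zero_iff _ (IsFractionRing.injective R K)).mpr hav.ne_zero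
  simp [← hc, ha, ← C_mul, mul_inv_cancel₀ ha0]

theorem natDegree_add_minVal_lt {A x : intPoly R K} (hA : A ≠ 0) (hx : x ≠ 0)
    (hxu : ¬IsUnit x) :
    (A : K[X]).natDegree + minVal A <
      ((A * x : intPoly R K) : K[X]).natDegree + minVal (A * x) := by
  have hdeg := natDegree_mul (p := (A : K[X])) (q := x) (by simpa using hA) (by simpa using hx)
  have hval := minVal_add_minVal_le (mul_ne_zero hA hx)
  have hpos : 0 < (x : K[X]).natDegree + minVal x := by
    by_contra! h
    exact hxu (isUnit_of_natDegree_eq_zero_of_minVal_eq_zero hx (by omega) (by omega))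
  rw [Subring.coe_mul]
  omega

instance : WfDvdMonoid (intPoly R K) := by
  classical
  -- `natDegree + minVal` decreases strictly along `DvdNotUnit`; `0` is put on top
  let f : intPoly R K → WithTop ℕ := fun G =>
    if G = 0 then ⊤ else ((G : K[X]).natDegree + minVal G : ℕ)
  refine ⟨Subrelation.wf (fun {A B} h => ?_) (InvImage.wf f wellFounded_lt)⟩
  obtain ⟨hA, x, hxu, rfl⟩ := h
  by_cases hx : x = 0
  · simp [InvImage, f, hA, hx]
  · simp only [InvImage, f, hA, hx, mul_eq_zero, or_self, if_false]
    exact_mod_cast natDegree_add_minVal_lt hA hx hxu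

end intPoly

section AbsolutelyIrreducible

variable {R K : Type*} [CommRing R] [IsDomain R] [IsDiscreteValuationRing R] [Field K]
  [Algebra R K] [IsFractionRing R K] {S : Finset R} {m : R → ℕ}

theorem eq_neg_fixDivVal_of_irreducible {u : Rˣ} {z : ℤ}
    (hF : splitPoly K (algebraMap R K u * algebraMap R K (uniformizer R) ^ z) S m ∈ intPoly R K)
    (hirr : Irreducible (⟨_, hF⟩ : intPoly R K)) (hdeg : 0 < ∑ s ∈ S, m s) :
    z = -fixDivVal S m := by
  have hz := (splitPoly_mem_intPoly_iff u z S m).mp hF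
  by_contra hne
  -- otherwise `F = ϖ · (F / ϖ)` is a factorization into nonunits of Int(R)
  have hϖ := (splitPoly_mem_intPoly_iff (K := K) 1 1 S 0).mpr (by omega)
  have hG := (splitPoly_mem_intPoly_iff (K := K) u (z - 1) S m).mpr (by omega)
  have hprod : (⟨_, hF⟩ : intPoly R K) = ⟨_, hϖ⟩ * ⟨_, hG⟩ := by
    refine Subtype.ext ?_
    simp only [Subring.coe_mul, splitPoly_mul, zero_add]
    congr 1
    have h0 := algebraMap_uniformizer_ne_zero (R := R) (K := K)
    rw [zpow_sub_one₀ h0]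
    field_simp
    simp
  rcases hirr.isUnit_or_isUnit hprod with hu | hu
  · exact (irreducible_uniformizer R).not_isUnit
      (intPoly.isUnit_of_eval_eq_of_isUnit hu (r := 0) (by rw [eval_splitPoly]; simp))
  · exact intPoly.not_isUnit_of_natDegree_pos
      (by rwa [natDegree_splitPoly (algebraMap_unit_mul_zpow_ne_zero u _)]) hu

theorem exists_splitPoly_mul_eq_pow (u : Rˣ) {N : ℕ} {μ ν : R → ℕ}
    (hsum : ∀ s ∈ S, μ s + ν s = N * m s)
    (hle : N * fixDivVal S m ≤ fixDivVal S μ + fixDivVal S ν) :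
    ∃ c c' : K, c ≠ 0 ∧ c' ≠ 0 ∧ splitPoly K c S μ ∈ intPoly R K ∧
      splitPoly K c' S ν ∈ intPoly R K ∧ splitPoly K c S μ * splitPoly K c' S ν =
        splitPoly K (algebraMap R K u * algebraMap R K (uniformizer R) ^ (-fixDivVal S m : ℤ))
          S m ^ N := by
  refine ⟨_, _, algebraMap_unit_mul_zpow_ne_zero (u ^ N) (fixDivVal S ν - N * fixDivVal S m),
    algebraMap_unit_mul_zpow_ne_zero 1 (-fixDivVal S ν),
    (splitPoly_mem_intPoly_iff _ _ S μ).mpr (by omega),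
    (splitPoly_mem_intPoly_iff _ _ S ν).mpr (by omega), ?_⟩
  rw [splitPoly_mul, splitPoly_pow, splitPoly_congr _ (μ := μ + ν) (ν := N • m) hsum]
  congr 1
  rw [mul_pow, ← zpow_natCast (_ ^ _), ← zpow_mul, Units.val_one, map_one, one_mul, mul_assoc,
    ← zpow_add₀ algebraMap_uniformizer_ne_zero, Units.val_pow_eq_pow_val, map_pow]
  ring_nf

theorem isRigid_of_absolutelyIrreducible {F : K[X]} (hF : F ∈ intPoly R K)
    (habs : AbsolutelyIrreducible (⟨F, hF⟩ : intPoly R K)) {u : Rˣ} {z : ℤ}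
    (hFeq : F = splitPoly K (algebraMap R K u * algebraMap R K (uniformizer R) ^ z) S m)
    (hdeg : 0 < ∑ s ∈ S, m s) : IsRigid S m := by
  subst hFeq
  obtain rfl := eq_neg_fixDivVal_of_irreducible hF habs.1 hdeg
  intro N μ ν hsum hle s hs s' hs'
  by_cases hμ : ∀ s ∈ S, μ s = 0
  · simp [hμ s hs, hμ s' hs']
  by_cases hν : ∀ s ∈ S, ν s = 0
  · have h₁ := hsum s hs
    have h₂ := hsum s' hs'
    simp only [hν s hs, hν s' hs', add_zero] at h₁ h₂
    rw [h₁, h₂]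
    ring
  obtain ⟨sμ, hsμ, hμ0⟩ := not_forall₂.mp hμ
  obtain ⟨sν, hsν, hν0⟩ := not_forall₂.mp hν
  obtain ⟨c, c', hc, hc', hG, hH, hGH⟩ := exists_splitPoly_mul_eq_pow (K := K) u hsum hle
  obtain ⟨t, ht⟩ := habs.associated_pow_of_mul_eq_pow (intPoly.not_isUnit_splitPoly hc hsμ hμ0 hG)
    (intPoly.not_isUnit_splitPoly hc' hsν hν0 hH) (Subtype.ext hGH)
  have hassoc := ht.map (intPoly R K).subtype
  rw [map_pow] at hassoc
  have hμm {x : R} (hx : x ∈ S) : μ x = t * m x := eq_mul_of_associated_splitPoly_pow hc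
    (algebraMap_unit_mul_zpow_ne_zero (K := K) _ _) hassoc hx
  rw [hμm hs, hμm hs']
  ring

end AbsolutelyIrreducible

/-- If `F ∈ Int(R)` splits over `K` with root set `S ⊆ R` and is
absolutely irreducible, then `|S| ≡ 1 (mod q - 1)`, where `q` is the order of the residue
field. -/
theorem statement4 (R K : Type*) [CommRing R] [IsDomain R] [IsDiscreteValuationRing R]
    [Finite (IsLocalRing.ResidueField R)]
    [Field K] [Algebra R K] [IsFractionRing R K]
    (F : Polynomial K) (hF : F ∈ intPoly R K)
    (hsplit : Polynomial.Splits (F.map (RingHom.id K))) (hdeg : 0 < F.degree)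
    (S : Finset R) (hroots : ∀ z : K, F.IsRoot z ↔ ∃ s ∈ S, algebraMap R K s = z)
    (habs : AbsolutelyIrreducible (⟨F, hF⟩ : intPoly R K)) :
    S.card ≡ 1 [MOD Nat.card (IsLocalRing.ResidueField R) - 1] := by
  rw [map_id] at hsplit
  have hF0 : F ≠ 0 := ne_zero_of_degree_gt hdeg
  set m : R → ℕ := fun s => F.rootMultiplicity (algebraMap R K s)
  have hm : ∀ s ∈ S, 0 < m s := fun s hs =>
    (rootMultiplicity_pos hF0).mpr ((hroots _).mpr ⟨s, hs, rfl⟩)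
  obtain ⟨r, hr⟩ := hsplit.exists_eval_eq_zero (ne_of_gt hdeg)
  obtain ⟨s₀, hs₀, -⟩ := (hroots r).mp hr
  obtain ⟨z, u, hc⟩ := exists_units_eq_smul_zpow_of_irreducible (K := K)
    (irreducible_uniformizer R) (leadingCoeff_ne_zero.mpr hF0)
  have hFeq : F = splitPoly K (algebraMap R K u * algebraMap R K (uniformizer R) ^ z) S m := by
    rw [← Algebra.smul_def, ← Units.smul_def, ← hc]
    exact eq_splitPoly_of_splits hsplit hF0 hroots
  refine (isRigid_of_absolutelyIrreducible hF habs hFeq ?_).card_modEq_one ⟨s₀, hs₀⟩ hm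
  exact (hm s₀ hs₀).trans_le (Finset.single_le_sum (fun _ _ => Nat.zero_le _) hs₀)
end

section
/- Let D be an atomic domain and let S be a set of prime ideals of D such that for every nonzero nonunit c ∈ D the radical of the principal ideal cD equals the intersection of all P ∈ S with c ∈ P. Then for every nonzero nonunit d ∈ D the following are equivalent: (i) some power d^n admits a factorization into irreducibles that is not, up to order and unit factors, d ⋯ d (n copies); (ii) some power of d is divisible by an irreducible element of D not associated to d; (iii) there exists a non-unit c ∈ D, not associated to any power of d, such that every P ∈ S containing c also contains d. -/
open Polynomial

private lemma aux_assoc_prod_pow {D : Type*} [CommMonoid D] (l : Multiset D) (d : D)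
    (h : ∀ a ∈ l, Associated a d) : Associated l.prod (d ^ Multiset.card l) := by
  induction l using Multiset.induction with
  | empty => simp
  | cons a s ih =>
    simp only [Multiset.prod_cons, Multiset.card_cons, pow_succ, mul_comm (d ^ Multiset.card s) d]
    exact (h a (Multiset.mem_cons_self a s)).mul_mul (ih fun b hb => h b (Multiset.mem_cons_of_mem hb))

private lemma aux_pow_assoc_inj {D : Type*} [CommRing D] [IsDomain D] {d : D} (hd0 : d ≠ 0)
    (hdu : ¬IsUnit d) : ∀ {a b : ℕ}, Associated (d ^ a) (d ^ b) → a = b := by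
  have key : ∀ {a b : ℕ}, a ≤ b → Associated (d ^ a) (d ^ b) → a = b := by
    intro a b hab ⟨u, hu⟩
    by_contra hne
    have h2 : d ^ a * (u : D) = d ^ a * d ^ (b - a) := by
      rw [hu, ← pow_add, Nat.add_sub_cancel' hab]
    have h3 : (u : D) = d ^ (b - a) := mul_left_cancel₀ (pow_ne_zero _ hd0) h2
    have h4 : IsUnit (d ^ (b - a)) := h3 ▸ u.isUnit
    exact hdu ((isUnit_pow_iff (by omega)).mp h4)
  intro a b h
  rcases le_total a b with hab | hab
  · exact key hab h
  · exact (key hab h.symm).symm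

private lemma aux_not_irred_pow {D : Type*} [CommMonoid D] {d : D} (hdu : ¬IsUnit d) {n : ℕ}
    (hn : 2 ≤ n) : ¬Irreducible (d ^ n) := by
  intro h
  have hd : d ^ n = d ^ (n - 1) * d := by rw [← pow_succ]; congr 1; omega
  rcases h.isUnit_or_isUnit hd with h1 | h1
  · exact hdu ((isUnit_pow_iff (by omega)).mp h1)
  · exact hdu h1

/-- In an atomic domain `D` with a set `S` of prime ideals such that the
radical of each principal ideal generated by a nonzero nonunit is the intersection of the
members of `S` containing it, the following are equivalent for a nonzero nonunit `d`:
(i) some power `d ^ n` has a factorization into irreducibles other than `n` copies of `d`;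
(ii) some power of `d` is divisible by an irreducible not associated to `d`;
(iii) there is a (nonzero) non-unit `c`, not associated to any power of `d`, such that
every `P ∈ S` containing `c` contains `d`. -/
theorem statement7 (D : Type*) [CommRing D] [IsDomain D]
    (hatomic : ∀ d : D, d ≠ 0 → ¬IsUnit d →
      ∃ l : Multiset D, (∀ a ∈ l, Irreducible a) ∧ l.prod = d)
    (S : Set (Ideal D)) (hSprime : ∀ P ∈ S, P.IsPrime)
    (hrad : ∀ c : D, c ≠ 0 → ¬IsUnit c →
      (Ideal.span {c}).radical = ⨅ P ∈ {P | P ∈ S ∧ c ∈ P}, P)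
    (d : D) (hd0 : d ≠ 0) (hdu : ¬IsUnit d) :
    ((∃ n : ℕ, 1 ≤ n ∧ ∃ l : Multiset D, (∀ a ∈ l, Irreducible a) ∧ l.prod = d ^ n ∧
        ¬(Multiset.card l = n ∧ ∀ a ∈ l, Associated a d)) ↔
      (∃ (c : D) (n : ℕ), Irreducible c ∧ ¬Associated c d ∧ c ∣ d ^ n)) ∧
    ((∃ (c : D) (n : ℕ), Irreducible c ∧ ¬Associated c d ∧ c ∣ d ^ n) ↔
      (∃ c : D, c ≠ 0 ∧ ¬IsUnit c ∧ (∀ k : ℕ, ¬Associated c (d ^ k)) ∧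
        ∀ P ∈ S, c ∈ P → d ∈ P)) := by
  have hnot_assoc_pow : ∀ (c : D), Irreducible c → ¬Associated c d →
      ∀ k : ℕ, ¬Associated c (d ^ k) := by
    intro c hc hcd k hk
    match k with
    | 0 => exact hc.not_isUnit (associated_one_iff_isUnit.mp (by simpa using hk))
    | 1 => exact hcd (by simpa using hk)
    | (m + 2) => exact aux_not_irred_pow hdu (by omega) (hk.irreducible hc)
  constructor
  · constructor
    · rintro ⟨n, hn, l, hirr, hprod, hne⟩
      by_cases hall : ∀ a ∈ l, Associated a d
      · exfalso
        have h1 := aux_assoc_prod_pow l d hall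
        rw [hprod] at h1
        exact hne ⟨(aux_pow_assoc_inj hd0 hdu h1).symm, hall⟩
      · push_neg at hall
        obtain ⟨c, hcmem, hcd⟩ := hall
        exact ⟨c, n, hirr c hcmem, hcd, hprod ▸ Multiset.dvd_prod hcmem⟩
    · rintro ⟨c, n, hc, hcd, hdvd⟩
      have hn : n ≠ 0 := by
        rintro rfl
        exact hc.not_isUnit (isUnit_of_dvd_one (by simpa using hdvd))
      obtain ⟨e, he⟩ := hdvd
      have he0 : e ≠ 0 := by
        rintro rfl
        exact pow_ne_zero n hd0 (by simpa using he)
      by_cases heu : IsUnit e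
      · exfalso
        obtain ⟨u, rfl⟩ := heu
        have hassoc : Associated c (d ^ n) := ⟨u, he.symm⟩
        exact hnot_assoc_pow c hc hcd n hassoc
      · obtain ⟨m, hm, hmp⟩ := hatomic e he0 heu
        refine ⟨n, Nat.one_le_iff_ne_zero.mpr hn, c ::ₘ m, ?_, ?_, ?_⟩
        · intro a ha
          rcases Multiset.mem_cons.mp ha with rfl | h
          · exact hc
          · exact hm a h
        · rw [Multiset.prod_cons, hmp]; exact he.symm
        · rintro ⟨_, hall⟩
          exact hcd (hall c (Multiset.mem_cons_self c m))
  · constructor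
    · rintro ⟨c, n, hc, hcd, hdvd⟩
      have hn : n ≠ 0 := by
        rintro rfl
        exact hc.not_isUnit (isUnit_of_dvd_one (by simpa using hdvd))
      refine ⟨c, hc.ne_zero, hc.not_isUnit, hnot_assoc_pow c hc hcd, ?_⟩
      intro P hP hcP
      obtain ⟨e, he⟩ := hdvd
      have : d ^ n ∈ P := he ▸ Ideal.mul_mem_right e P hcP
      exact (hSprime P hP).mem_of_pow_mem n this
    · rintro ⟨c, hc0, hcu, hck, hPd⟩
      have hdrad : d ∈ (Ideal.span {c}).radical := by
        rw [hrad c hc0 hcu]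
        rw [Ideal.mem_iInf]
        intro P
        rw [Ideal.mem_iInf]
        intro hP
        exact hPd P hP.1 hP.2
      obtain ⟨m, hm⟩ := hdrad
      rw [Ideal.mem_span_singleton] at hm
      obtain ⟨l, hl, hlp⟩ := hatomic c hc0 hcu
      by_cases hall : ∀ a ∈ l, Associated a d
      · exfalso
        have h1 := aux_assoc_prod_pow l d hall
        rw [hlp] at h1
        exact hck _ h1
      · push_neg at hall
        obtain ⟨q, hq, hqd⟩ := hall
        exact ⟨q, m, hl q hq, hqd, dvd_trans (hlp ▸ Multiset.dvd_prod hq) hm⟩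
end

section
/- Let (R,M) be a discrete valuation domain with finite residue field, quotient field K, and let F ∈ Int(R) be a nonzero nonunit. Then F is absolutely irreducible in Int(R) if and only if every G ∈ Int(R) satisfying both (a) for every a ∈ R, G(a) ∈ M implies F(a) ∈ M, and (b) every monic irreducible polynomial q ∈ K[x] dividing G in K[x] also divides F in K[x], is associated in Int(R) to a power of F. -/
open Polynomial

/-!
If `F` is absolutely irreducible, a polynomial `G` satisfying (a) and (b) divides a power of `F`
in `Int(R)`: by (b) it divides some `F ^ m` in `K[x]`, say `F ^ m = G * H`, and for large `N`
the polynomial `F ^ N * H` is integer-valued, since at points where `F(a) ∈ M` the factor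
`F(a) ^ N` absorbs the denominator of `H`, while elsewhere `G(a)` is a unit by (a), so that
`H(a) = F(a) ^ m / G(a) ∈ R`. As `Int(R)` is atomic, a divisor of a power of an absolutely
irreducible element is associated to a power of it. Conversely, every divisor of a power of `F`
satisfies (a) and (b), and an element whose divisors of powers are all associated to its powers
is absolutely irreducible.
-/

open Polynomial IsLocalRing

section AbsolutelyIrreducible

theorem Multiset.prod_associated_pow_card {M : Type*} [CommMonoid M] {l : Multiset M} {d : M}
    (h : ∀ a ∈ l, Associated a d) : Associated l.prod (d ^ Multiset.card l) := by
  induction l using Multiset.induction with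
  | empty => simp
  | cons a t ih =>
    rw [Multiset.prod_cons, Multiset.card_cons, pow_succ']
    exact (h a (Multiset.mem_cons_self a t)).mul_mul
      (ih fun x hx => h x (Multiset.mem_cons_of_mem hx))

variable {α : Type*} [CommMonoidWithZero α] [IsCancelMulZero α] {d : α}

theorem eq_of_associated_pow_pow (hd0 : d ≠ 0) (hdu : ¬IsUnit d) {i j : ℕ}
    (h : Associated (d ^ i) (d ^ j)) : i = j :=
  le_antisymm ((pow_dvd_pow_iff hd0 hdu).1 h.dvd) ((pow_dvd_pow_iff hd0 hdu).1 h.symm.dvd)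

theorem AbsolutelyIrreducible.associated_pow_of_dvd_pow [WfDvdMonoid α]
    (hd : AbsolutelyIrreducible d) {x : α} {n : ℕ} (hx : x ∣ d ^ n) :
    ∃ k, Associated x (d ^ k) := by
  obtain ⟨y, hxy⟩ : x ∣ d ^ (n + 1) := hx.trans (pow_dvd_pow d n.le_succ)
  have hxy0 : x * y ≠ 0 := hxy ▸ pow_ne_zero _ hd.1.ne_zero
  by_cases hxu : IsUnit x
  · exact ⟨0, by rwa [pow_zero, associated_one_iff_isUnit]⟩
  by_cases hyu : IsUnit y
  · exact ⟨n + 1, hxy ▸ associated_mul_unit_right x y hyu⟩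
  obtain ⟨lx, hlx, rfl, -⟩ :=
    (WfDvdMonoid.not_isUnit_iff_exists_factors_eq x (left_ne_zero_of_mul hxy0)).1 hxu
  obtain ⟨ly, hly, rfl, -⟩ :=
    (WfDvdMonoid.not_isUnit_iff_exists_factors_eq y (right_ne_zero_of_mul hxy0)).1 hyu
  have hl : ∀ a ∈ lx + ly, Irreducible a := fun a ha =>
    (Multiset.mem_add.1 ha).elim (hlx a) (hly a)
  obtain ⟨-, hassoc⟩ := hd.2 (n + 1) n.succ_pos (lx + ly) hl (by rw [Multiset.prod_add, hxy])
  exact ⟨_, Multiset.prod_associated_pow_card fun a ha =>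
    hassoc a (Multiset.mem_add.2 (.inl ha))⟩

theorem absolutelyIrreducible_of_forall_dvd_pow (hd0 : d ≠ 0) (hdu : ¬IsUnit d)
    (h : ∀ x n, x ∣ d ^ n → ∃ k, Associated x (d ^ k)) : AbsolutelyIrreducible d := by
  have associated_of_irreducible {x : α} {n : ℕ} (hx : x ∣ d ^ n) (hirr : Irreducible x) :
      Associated x d := by
    obtain ⟨k, hk⟩ := h x n hx
    obtain rfl : k = 1 := by_contra fun hk1 => not_irreducible_pow hk1 (hk.irreducible hirr)
    rwa [pow_one] at hk
  refine ⟨⟨hdu, fun a b hab => ?_⟩, fun n _ l hl hprod => ?_⟩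
  · obtain ⟨i, hi⟩ := h a 1 (by rw [pow_one, hab]; exact dvd_mul_right a b)
    obtain ⟨j, hj⟩ := h b 1 (by rw [pow_one, hab]; exact dvd_mul_left b a)
    have hij : 1 = i + j := by
      have hab' := hi.mul_mul hj
      rw [← hab, ← pow_add] at hab'
      exact eq_of_associated_pow_pow hd0 hdu (by rwa [pow_one])
    rcases i with _ | _
    · exact .inl (associated_one_iff_isUnit.1 (by simpa using hi))
    · obtain rfl : j = 0 := by omega
      exact .inr (associated_one_iff_isUnit.1 (by simpa using hj))
  · have hassoc : ∀ a ∈ l, Associated a d := fun a ha =>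
      associated_of_irreducible (hprod ▸ Multiset.dvd_prod ha) (hl a ha)
    exact ⟨(eq_of_associated_pow_pow hd0 hdu
      (hprod ▸ Multiset.prod_associated_pow_card hassoc)).symm, hassoc⟩

end AbsolutelyIrreducible

theorem UniqueFactorizationMonoid.exists_dvd_pow_of_forall_prime_dvd {α : Type*}
    [CommMonoidWithZero α] [UniqueFactorizationMonoid α] {a b : α} (ha : a ≠ 0)
    (h : ∀ p, Prime p → p ∣ a → p ∣ b) : ∃ n, a ∣ b ^ n := by
  induction a using UniqueFactorizationMonoid.induction_on_prime with
  | h₁ => exact absurd rfl ha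
  | h₂ x hx => exact ⟨0, hx.dvd⟩
  | h₃ a p ha0 hp ih =>
    obtain ⟨n, hn⟩ := ih ha0 fun q hq hqa => h q hq (dvd_mul_of_dvd_right hqa p)
    exact ⟨n + 1, pow_succ' b n ▸ mul_dvd_mul (h p hp (dvd_mul_right p a)) hn⟩

theorem Polynomial.exists_dvd_pow_of_forall_monic_irreducible_dvd {K : Type*} [Field K]
    {F G : K[X]} (hG : G ≠ 0)
    (h : ∀ q : K[X], q.Monic → Irreducible q → q ∣ G → q ∣ F) : ∃ n, G ∣ F ^ n := by
  classical
  refine UniqueFactorizationMonoid.exists_dvd_pow_of_forall_prime_dvd hG fun p hp hpG => ?_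
  have hnp := normalize_associated p
  exact hnp.dvd_iff_dvd_left.1 (h _ (monic_normalize hp.ne_zero)
    (hnp.symm.irreducible hp.irreducible) (hnp.dvd_iff_dvd_left.2 hpG))

theorem IsDiscreteValuationRing.infinite (R : Type*) [CommRing R] [IsDomain R]
    [IsDiscreteValuationRing R] : Infinite R :=
  not_finite_iff_infinite.1 fun _ => not_isField R (Finite.isField_of_domain R)

namespace intPoly

section

variable {R K : Type*} [CommRing R] [CommRing K] [Algebra R K]

noncomputable def value (G : intPoly R K) (a : R) : R :=
  Classical.choose (G.2 a)

theorem algebraMap_value (G : intPoly R K) (a : R) :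
    algebraMap R K (value G a) = (G : K[X]).eval (algebraMap R K a) :=
  (Classical.choose_spec (G.2 a)).symm

variable [IsFractionRing R K]

noncomputable def eval (a : R) : intPoly R K →+* R where
  toFun G := value G a
  map_one' := IsFractionRing.injective R K (by simp [algebraMap_value])
  map_mul' G H := IsFractionRing.injective R K (by simp [algebraMap_value])
  map_zero' := IsFractionRing.injective R K (by simp [algebraMap_value])
  map_add' G H := IsFractionRing.injective R K (by simp [algebraMap_value])

theorem algebraMap_eval (a : R) (G : intPoly R K) :
    algebraMap R K (eval a G) = (G : K[X]).eval (algebraMap R K a) :=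
  algebraMap_value G a

theorem exists_mem_eval_eq_iff {G : K[X]} (hG : G ∈ intPoly R K) (a : R) (I : Ideal R) :
    (∃ g ∈ I, G.eval (algebraMap R K a) = algebraMap R K g) ↔ eval a ⟨G, hG⟩ ∈ I := by
  refine ⟨fun ⟨g, hg, h⟩ => ?_, fun h => ⟨_, h, (algebraMap_eval a ⟨G, hG⟩).symm⟩⟩
  rwa [IsFractionRing.injective R K (h.symm.trans (algebraMap_eval a ⟨G, hG⟩).symm)] at hg

theorem eval_mem_of_dvd_pow {P : Ideal R} [P.IsPrime] {F G : intPoly R K} {n : ℕ}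
    (hG : G ∣ F ^ n) {a : R} (ha : eval a G ∈ P) : eval a F ∈ P :=
  ‹P.IsPrime›.mem_of_pow_mem n (map_pow (eval a) F n ▸ Ideal.mem_of_dvd _ (map_dvd _ hG) ha)

end

section

variable {R K : Type*} [CommRing R] [Field K] [Algebra R K] [IsFractionRing R K]

noncomputable def const : R →+* intPoly R K :=
  ((mapRingHom (algebraMap R K)).comp C).codRestrict _ fun r => map_mem_intPoly R K (C r)

theorem eq_const_eval_of_natDegree_eq_zero {G : intPoly R K} (hG : (G : K[X]).natDegree = 0)
    (a : R) : G = const (eval a G) := by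
  have hC := eq_C_of_natDegree_eq_zero hG
  refine Subtype.ext ?_
  change (G : K[X]) = (C (eval a G)).map (algebraMap R K)
  rw [Polynomial.map_C, algebraMap_eval, hC, eval_C, ← hC]

theorem exists_eval_ne_zero [Infinite R] {G : intPoly R K} (hG : G ≠ 0) :
    ∃ a, eval a G ≠ 0 := by
  by_contra! h
  refine hG (Subtype.ext (eq_zero_of_infinite_isRoot _
    ((Set.infinite_range_of_injective (IsFractionRing.injective R K)).mono ?_)))
  rintro _ ⟨a, rfl⟩
  simp [← algebraMap_eval, h a]

theorem prodLex_of_dvdNotUnit {G H : intPoly R K} {a : R} (hGH : DvdNotUnit G H)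
    (hH : eval a H ≠ 0) :
    Prod.Lex (· < ·) DvdNotUnit
      ((G : K[X]).natDegree, eval a G) ((H : K[X]).natDegree, eval a H) := by
  obtain ⟨-, U, hU, rfl⟩ := hGH
  rw [map_mul] at hH ⊢
  have hG0 : (G : K[X]) ≠ 0 := fun h =>
    left_ne_zero_of_mul hH (by rw [show G = 0 from Subtype.ext h, map_zero])
  have hU0 : (U : K[X]) ≠ 0 := fun h =>
    right_ne_zero_of_mul hH (by rw [show U = 0 from Subtype.ext h, map_zero])
  rw [Subring.coe_mul, natDegree_mul hG0 hU0]
  rcases Nat.eq_zero_or_pos (U : K[X]).natDegree with hUdeg | hUdeg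
  · rw [hUdeg, add_zero]
    refine .right _ ⟨left_ne_zero_of_mul hH, eval a U, fun hu => hU ?_, rfl⟩
    rw [eq_const_eval_of_natDegree_eq_zero hUdeg a]
    exact hu.map const
  · exact .left _ _ (by omega)

/-- Strict divisibility decreases the degree, or else the cofactor is a constant nonunit and the
value at any point where the dividend does not vanish strictly divides in `R`. -/
instance [WfDvdMonoid R] [Infinite R] : WfDvdMonoid (intPoly R K) := by
  have acc_of_eval_ne_zero (a : R) (H : intPoly R K) : eval a H ≠ 0 → Acc DvdNotUnit H := by
    refine (InvImage.wf (fun G : intPoly R K => ((G : K[X]).natDegree, eval a G))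
      (Nat.lt_wfRel.wf.prod_lex wellFounded_dvdNotUnit)).induction H
      (C := fun H => eval a H ≠ 0 → Acc DvdNotUnit H) fun H ih hH => ?_
    refine ⟨H, fun G hGH => ih G (prodLex_of_dvdNotUnit hGH hH) fun hG => hH ?_⟩
    obtain ⟨-, U, -, rfl⟩ := hGH
    rw [map_mul, hG, zero_mul]
  refine ⟨⟨fun H => ⟨H, fun G hGH => ?_⟩⟩⟩
  obtain ⟨a, ha⟩ := exists_eval_ne_zero hGH.1
  exact acc_of_eval_ne_zero a G ha

theorem exists_pow_mul_mem [IsDomain R] [IsDiscreteValuationRing R] {F G : intPoly R K}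
    {H : K[X]} {m : ℕ} (hFGH : (F : K[X]) ^ m = G * H)
    (hM : ∀ a, eval a G ∈ maximalIdeal R → eval a F ∈ maximalIdeal R) :
    ∃ N, (F : K[X]) ^ N * H ∈ intPoly R K := by
  obtain ⟨c, hc0, hc⟩ := IsLocalization.integerNormalization_spec (nonZeroDivisors R) H
  set h := IsLocalization.integerNormalization (nonZeroDivisors R) H
  obtain ⟨N, hN⟩ := exists_maximalIdeal_pow_eq_of_principal R (IsPrincipalIdealRing.principal _)
    (Ideal.span {c}) (by simpa using nonZeroDivisors.ne_zero hc0)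
  have hHa (a : R) : algebraMap R K c * H.eval (algebraMap R K a) = algebraMap R K (h.eval a) := by
    simpa [eval_map, eval₂_at_apply, Algebra.smul_def] using
      (congrArg (Polynomial.eval (algebraMap R K a)) hc).symm
  refine ⟨N, fun a => ?_⟩
  simp only [eval_mul, eval_pow, ← algebraMap_eval]
  by_cases hFa : eval a F ∈ maximalIdeal R
  · obtain ⟨r, hr⟩ : (c : R) ∣ eval a F ^ N := by
      rw [← Ideal.mem_span_singleton, hN]
      exact Ideal.pow_mem_pow hFa N
    refine ⟨r * h.eval a, ?_⟩
    rw [← map_pow, hr, map_mul, map_mul, ← hHa]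
    ring
  · obtain ⟨u, hu⟩ : IsUnit (eval a G) := notMem_maximalIdeal.1 (mt (hM a) hFa)
    have hH : H.eval (algebraMap R K a) = algebraMap R K (eval a F ^ m * ↑u⁻¹) := by
      have := congrArg (Polynomial.eval (algebraMap R K a)) hFGH
      rw [eval_pow, eval_mul, ← algebraMap_eval, ← algebraMap_eval, ← hu] at this
      rw [map_mul, map_pow, this, mul_right_comm, ← map_mul, Units.mul_inv, map_one, one_mul]
    exact ⟨eval a F ^ N * (eval a F ^ m * ↑u⁻¹), by rw [hH]; simp only [map_mul, map_pow]⟩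

theorem exists_dvd_pow_of_forall_irreducible_dvd [IsDomain R] [IsDiscreteValuationRing R]
    {F G : intPoly R K} (hF0 : F ≠ 0)
    (hM : ∀ a, eval a G ∈ maximalIdeal R → eval a F ∈ maximalIdeal R)
    (hq : ∀ q : K[X], q.Monic → Irreducible q → q ∣ G → q ∣ F) : ∃ n, G ∣ F ^ n := by
  have := IsDiscreteValuationRing.infinite R
  have hG0 : (G : K[X]) ≠ 0 := by
    intro hG0
    obtain ⟨a, ha⟩ := exists_eval_ne_zero hF0
    have := hq _ (monic_X_sub_C (algebraMap R K a)) (irreducible_X_sub_C _) (hG0 ▸ dvd_zero _)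
    rw [dvd_iff_isRoot, IsRoot, ← algebraMap_eval] at this
    exact ha (IsFractionRing.injective R K (by simpa using this))
  obtain ⟨m, H, hH⟩ := exists_dvd_pow_of_forall_monic_irreducible_dvd hG0 hq
  obtain ⟨N, hN⟩ := exists_pow_mul_mem hH hM
  exact ⟨N + m, ⟨F ^ N * H, hN⟩, Subtype.ext (by push_cast; rw [pow_add, hH]; ring)⟩

end

end intPoly

theorem statement8_general (R K : Type*) [CommRing R] [IsDomain R] [IsDiscreteValuationRing R]
    [Field K] [Algebra R K] [IsFractionRing R K]
    (F : Polynomial K) (hF : F ∈ intPoly R K)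
    (hF0 : F ≠ 0) (hFu : ¬IsUnit (⟨F, hF⟩ : intPoly R K)) :
    AbsolutelyIrreducible (⟨F, hF⟩ : intPoly R K) ↔
      ∀ (G : Polynomial K) (hG : G ∈ intPoly R K),
        (∀ a : R,
          (∃ g ∈ IsLocalRing.maximalIdeal R, G.eval (algebraMap R K a) = algebraMap R K g) →
          (∃ g ∈ IsLocalRing.maximalIdeal R, F.eval (algebraMap R K a) = algebraMap R K g)) →
        (∀ q : Polynomial K, q.Monic → Irreducible q → q ∣ G → q ∣ F) →
        ∃ n : ℕ, Associated (⟨G, hG⟩ : intPoly R K) ((⟨F, hF⟩ : intPoly R K) ^ n) := by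
  have := IsDiscreteValuationRing.infinite R
  have hF0' : (⟨F, hF⟩ : intPoly R K) ≠ 0 := fun h => hF0 (congrArg Subtype.val h)
  simp only [intPoly.exists_mem_eval_eq_iff hF]
  constructor
  · intro habs G hG hM hq
    obtain ⟨n, hn⟩ := intPoly.exists_dvd_pow_of_forall_irreducible_dvd hF0'
      (fun a => hM a ∘ (intPoly.exists_mem_eval_eq_iff hG a _).2) hq
    exact habs.associated_pow_of_dvd_pow hn
  · refine fun h => absolutelyIrreducible_of_forall_dvd_pow hF0' hFu fun x n hx =>
      h x x.2 (fun a ha => intPoly.eval_mem_of_dvd_pow hx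
        ((intPoly.exists_mem_eval_eq_iff x.2 a _).1 ha)) fun q _ hq hqx => ?_
    refine (UniqueFactorizationMonoid.irreducible_iff_prime.1 hq).dvd_of_dvd_pow (n := n) ?_
    exact hqx.trans (by exact_mod_cast map_dvd (intPoly R K).subtype hx)

/-- A nonzero nonunit `F ∈ Int(R)` is absolutely irreducible iff every
`G ∈ Int(R)` such that (a) `G(a) ∈ M` implies `F(a) ∈ M` for all `a ∈ R`, and (b) every
monic irreducible `q ∈ K[x]` dividing `G` also divides `F`, is associated in `Int(R)` to a
power of `F`. -/
theorem statement8 (R K : Type*) [CommRing R] [IsDomain R] [IsDiscreteValuationRing R]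
    [Finite (IsLocalRing.ResidueField R)]
    [Field K] [Algebra R K] [IsFractionRing R K]
    (F : Polynomial K) (hF : F ∈ intPoly R K)
    (hF0 : F ≠ 0) (hFu : ¬IsUnit (⟨F, hF⟩ : intPoly R K)) :
    AbsolutelyIrreducible (⟨F, hF⟩ : intPoly R K) ↔
      ∀ (G : Polynomial K) (hG : G ∈ intPoly R K),
        (∀ a : R,
          (∃ g ∈ IsLocalRing.maximalIdeal R, G.eval (algebraMap R K a) = algebraMap R K g) →
          (∃ g ∈ IsLocalRing.maximalIdeal R, F.eval (algebraMap R K a) = algebraMap R K g)) →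
        (∀ q : Polynomial K, q.Monic → Irreducible q → q ∣ G → q ∣ F) →
        ∃ n : ℕ, Associated (⟨G, hG⟩ : intPoly R K) ((⟨F, hF⟩ : intPoly R K) ^ n) :=
  statement8_general R K F hF hF0 hFu
end

section
/- Let (R,M) be a discrete valuation domain with finite residue field and quotient field K. Let f, g ∈ K[x] be monic and let F, G ∈ Int(R) be image-primitive with F·K[x] = f·K[x] and G·K[x] = g·K[x]. Then for every n ≥ 1: g = f^n if and only if G is associated to F^n in Int(R). -/
open Polynomial

/-!
Polynomials associated in `K[x]` differ by a constant factor `c ∈ K`. If both are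
image-primitive and integer-valued, evaluating at a point where one of them takes a unit value
of `R` shows `c ∈ R`, and evaluating at a point where the other does shows `c ∈ Rˣ`. So
image-primitive elements of `Int(R)` are associated in `Int(R)` exactly when they are in `K[x]`,
where a monic polynomial is determined by the principal ideal it generates.
-/

section IntPoly

variable (R K : Type*) [CommRing R] [CommRing K] [Algebra R K]

noncomputable def constIntPoly : R →+* intPoly R K :=
  (C.comp (algebraMap R K)).codRestrict (intPoly R K) fun a => by
    simpa using map_mem_intPoly R K (C a)

@[simp]
lemma coe_constIntPoly (a : R) : (constIntPoly R K a : K[X]) = C (algebraMap R K a) := rfl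

variable {R K}

lemma exists_isUnit_eval_of_fixDivK_eq_top [IsLocalRing R] {F : K[X]}
    (hF : fixDivK R K F = ⊤) :
    ∃ r a : R, IsUnit a ∧ F.eval (algebraMap R K r) = algebraMap R K a := by
  by_contra! h
  have hle : fixDivK R K F ≤ IsLocalRing.maximalIdeal R := by
    rw [fixDivK, Ideal.span_le]
    rintro a ⟨r, hr⟩
    exact fun ha => h r a ha hr
  exact (IsLocalRing.maximalIdeal.isMaximal R).ne_top (top_le_iff.mp (hF ▸ hle))

lemma fixDivK_pow_eq_top [IsLocalRing R] {F : K[X]} (hF : fixDivK R K F = ⊤) (n : ℕ) :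
    fixDivK R K (F ^ n) = ⊤ := by
  obtain ⟨r, a, ha, hr⟩ := exists_isUnit_eval_of_fixDivK_eq_top hF
  exact Ideal.eq_top_of_isUnit_mem _ (Ideal.subset_span ⟨r, by simp [hr]⟩) (ha.pow n)

/-- `c` lies in `R` because `F` takes a unit value on `R`, and is a unit because `G` does. -/
lemma exists_units_eq_of_eq_C_mul [IsLocalRing R] [IsFractionRing R K] {F G : K[X]}
    (hFmem : F ∈ intPoly R K) (hGmem : G ∈ intPoly R K)
    (hF : fixDivK R K F = ⊤) (hG : fixDivK R K G = ⊤) {c : K} (hc : G = C c * F) :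
    ∃ u : Rˣ, algebraMap R K u = c := by
  obtain ⟨r, a, ⟨a, rfl⟩, hr⟩ := exists_isUnit_eval_of_fixDivK_eq_top hF
  obtain ⟨s, b, hb, hs⟩ := exists_isUnit_eval_of_fixDivK_eq_top hG
  obtain ⟨d, hd⟩ := hGmem r
  obtain ⟨e, he⟩ := hFmem s
  have hc_eq : c = algebraMap R K (d * ↑a⁻¹) := by
    have : algebraMap R K d = c * algebraMap R K a := by rw [← hd, ← hr, hc, eval_mul, eval_C]
    rw [map_mul, this, mul_assoc, ← map_mul, Units.mul_inv, map_one, mul_one]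
  have hb_eq : b = d * ↑a⁻¹ * e := IsFractionRing.injective R K <| by
    rw [← hs, hc, eval_mul, eval_C, he, hc_eq, ← map_mul]
  exact ⟨(isUnit_of_mul_isUnit_left (hb_eq ▸ hb)).unit, hc_eq.symm⟩

end IntPoly

theorem associated_intPoly_iff {R K : Type*} [CommRing R] [IsLocalRing R] [Field K] [Algebra R K]
    [IsFractionRing R K]
    (P Q : intPoly R K) (hP : fixDivK R K P = ⊤) (hQ : fixDivK R K Q = ⊤) :
    Associated P Q ↔ Associated (P : K[X]) Q := by
  refine ⟨fun h => by simpa using h.map (intPoly R K).subtype, fun ⟨w, hw⟩ => ?_⟩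
  obtain ⟨c, -, hc⟩ := Polynomial.isUnit_iff.mp w.isUnit
  obtain ⟨u, rfl⟩ := exists_units_eq_of_eq_C_mul P.2 Q.2 hP hQ (c := c) <| by
    rw [← hw, ← hc, mul_comm]
  exact ⟨Units.map (constIntPoly R K).toMonoidHom u, Subtype.ext <| by simp [← hw, ← hc]⟩

theorem statement9_general (R K : Type*) [CommRing R] [IsDomain R] [IsDiscreteValuationRing R]
    [Field K] [Algebra R K] [IsFractionRing R K]
    (f g : Polynomial K) (hf : f.Monic) (hg : g.Monic)
    (F G : Polynomial K) (hFmem : F ∈ intPoly R K) (hGmem : G ∈ intPoly R K)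
    (hFprim : fixDivK R K F = ⊤) (hGprim : fixDivK R K G = ⊤)
    (hFf : (Ideal.span {F} : Ideal (Polynomial K)) = Ideal.span {f})
    (hGg : (Ideal.span {G} : Ideal (Polynomial K)) = Ideal.span {g})
    (n : ℕ) :
    g = f ^ n ↔ Associated (⟨G, hGmem⟩ : intPoly R K) ((⟨F, hFmem⟩ : intPoly R K) ^ n) := by
  have hFf' : Associated F f := Ideal.span_singleton_eq_span_singleton.mp hFf
  have hGg' : Associated G g := Ideal.span_singleton_eq_span_singleton.mp hGg
  have hFnprim : fixDivK R K ((⟨F, hFmem⟩ ^ n : intPoly R K) : K[X]) = ⊤ := by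
    rw [Subring.coe_pow]
    exact fixDivK_pow_eq_top hFprim n
  rw [associated_intPoly_iff (⟨G, hGmem⟩ : intPoly R K) _ hGprim hFnprim, Subring.coe_pow]
  dsimp only
  have hFn : Associated (F ^ n) (f ^ n) := hFf'.pow_pow
  constructor
  · rintro rfl
    exact hGg'.trans hFn.symm
  · exact fun h => eq_of_monic_of_associated hg (hf.pow n) (hGg'.symm.trans (h.trans hFn))

/-- Let `f, g ∈ K[x]` be monic and `F, G ∈ Int(R)` image-primitive with
`F·K[x] = f·K[x]` and `G·K[x] = g·K[x]`. Then for `n ≥ 1`: `g = f ^ n` iff `G` is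
associated to `F ^ n` in `Int(R)`. -/
theorem statement9 (R K : Type*) [CommRing R] [IsDomain R] [IsDiscreteValuationRing R]
    [Finite (IsLocalRing.ResidueField R)]
    [Field K] [Algebra R K] [IsFractionRing R K]
    (f g : Polynomial K) (hf : f.Monic) (hg : g.Monic)
    (F G : Polynomial K) (hFmem : F ∈ intPoly R K) (hGmem : G ∈ intPoly R K)
    (hFprim : fixDivK R K F = ⊤) (hGprim : fixDivK R K G = ⊤)
    (hFf : (Ideal.span {F} : Ideal (Polynomial K)) = Ideal.span {f})
    (hGg : (Ideal.span {G} : Ideal (Polynomial K)) = Ideal.span {g})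
    (n : ℕ) (hn : 1 ≤ n) :
    g = f ^ n ↔ Associated (⟨G, hGmem⟩ : intPoly R K) ((⟨F, hFmem⟩ : intPoly R K) ^ n) :=
  statement9_general R K f g hf hg F G hFmem hGmem hFprim hGprim hFf hGg n
end

section
/- Let (R,M) be a discrete valuation domain with finite residue field and let S ⊆ R be a finite nonempty subset. Then there exists a uniquely determined finite partition C_S = {s + M^{n_s} : s ∈ S} of R into residue classes of powers of M, each block containing an element of S, such that every block s+M^{n_s} contains both a residue class of M^{n_s+1} intersecting S and a residue class of M^{n_s+1} disjoint from S. As a consequence, S contains a balanced subset S' with C_{S'} = C_S. -/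
open Polynomial

/-!
For `x ∈ R` let `ν x` be the least `n` such that some residue class of `M ^ (n + 1)` inside
`x + M ^ n` misses `S`. It exists because, by Krull's intersection theorem, a deep enough class
contains at most one point of the finite set `S`, while it has at least two children. Since `ν`
is constant on `x + M ^ (ν x)`, these classes partition `R`, and by minimality of `ν` each of them
meets `S`. Conversely, let `ρ` describe a partition as in the statement and let `m < ρ s`. A point
`y ∈ s + M ^ m` lies in a block `t + M ^ (ρ t)` with `ρ t > m`, since otherwise that block would
contain `s` without being the block of `s`; so `y + M ^ (m + 1)` contains `t ∈ S`. Hence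
`ρ s ≤ ν s`, and the child of `s + M ^ (ρ s)` missing `S` gives `ν s ≤ ρ s`. Choosing one point
of `S` in each block yields the balanced subset.
-/

open IsLocalRing

section LocalRing

variable {R : Type*} [CommRing R] [IsLocalRing R]

theorem mem_resClass_iff {s x : R} {n : ℕ} :
    x ∈ resClass R s n ↔ x - s ∈ maximalIdeal R ^ n :=
  Iff.rfl

theorem mem_resClass_iff_mk_eq {s x : R} {n : ℕ} :
    x ∈ resClass R s n ↔ Ideal.Quotient.mk (maximalIdeal R ^ n) x = Ideal.Quotient.mk _ s :=
  Ideal.Quotient.eq.symm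

theorem mem_resClass_self (s : R) (n : ℕ) : s ∈ resClass R s n := by
  simp [mem_resClass_iff]

theorem mem_resClass_comm {s x : R} {n : ℕ} : x ∈ resClass R s n ↔ s ∈ resClass R x n := by
  simp only [mem_resClass_iff_mk_eq, eq_comm]

theorem resClass_zero (s : R) : resClass R s 0 = Set.univ := by
  ext
  simp [mem_resClass_iff]

theorem resClass_anti (s : R) : Antitone (resClass R s) :=
  fun _ _ h _ hx => Ideal.pow_le_pow_right h hx

theorem resClass_eq_of_mem {s x : R} {n : ℕ} (h : x ∈ resClass R s n) :
    resClass R x n = resClass R s n := by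
  ext y
  simp only [mem_resClass_iff_mk_eq, mem_resClass_iff_mk_eq.1 h]

theorem pow_eq_pow_of_resClass_eq {s t : R} {a b : ℕ} (h : resClass R s a = resClass R t b) :
    maximalIdeal R ^ a = maximalIdeal R ^ b := by
  have hs : resClass R s b = resClass R t b := resClass_eq_of_mem (h ▸ mem_resClass_self s a)
  ext w
  simpa [mem_resClass_iff] using Set.ext_iff.1 (h.trans hs.symm) (w + s)

def AllChildrenMeet (S : Finset R) (x : R) (n : ℕ) : Prop :=
  ∀ y ∈ resClass R x n, (resClass R y (n + 1) ∩ S).Nonempty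

theorem allChildrenMeet_congr {S : Finset R} {x y : R} {m n : ℕ} (hy : y ∈ resClass R x n)
    (hmn : m ≤ n) : AllChildrenMeet S y m ↔ AllChildrenMeet S x m := by
  unfold AllChildrenMeet
  rw [resClass_eq_of_mem (resClass_anti x hmn hy)]

/-- The exponent `n_x` of the block `x + M ^ n_x` of `C_S` containing `x`. -/
noncomputable def blockLevel (S : Finset R) (x : R) : ℕ :=
  sInf {n | ¬ AllChildrenMeet S x n}

theorem allChildrenMeet_of_lt_blockLevel {S : Finset R} {x : R} {m : ℕ}
    (h : m < blockLevel S x) : AllChildrenMeet S x m :=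
  not_not.1 (Nat.notMem_of_lt_sInf h)

theorem blockLevel_le_of_not_allChildrenMeet {S : Finset R} {x : R} {m : ℕ}
    (h : ¬ AllChildrenMeet S x m) : blockLevel S x ≤ m :=
  Nat.sInf_le h

/-- A point of `S` in the block of `x`, depending only on that block. -/
noncomputable def blockRep (S : Finset R) (x : R) : R :=
  Classical.epsilon fun s => s ∈ resClass R x (blockLevel S x) ∩ S

end LocalRing

section DiscreteValuationRing

variable {R : Type*} [CommRing R] [IsDomain R] [IsDiscreteValuationRing R]

theorem exists_mem_resClass_notMem_resClass_succ (s : R) (n : ℕ) :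
    ∃ y ∈ resClass R s n, y ∉ resClass R s (n + 1) := by
  obtain ⟨a, ha, ha'⟩ := Ideal.exists_mem_pow_notMem_pow_succ _
    (IsDiscreteValuationRing.not_a_field R) (maximalIdeal.isMaximal R).ne_top n
  exact ⟨a + s, by simpa [mem_resClass_iff] using ha, by simpa [mem_resClass_iff] using ha'⟩

theorem eq_of_resClass_eq {s t : R} {a b : ℕ} (h : resClass R s a = resClass R t b) : a = b :=
  (Ideal.pow_right_strictAnti _ (IsDiscreteValuationRing.not_a_field R)
    (maximalIdeal.isMaximal R).ne_top).injective (pow_eq_pow_of_resClass_eq h)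

theorem eventually_notMem_resClass {s t : R} (h : t ≠ s) :
    ∀ᶠ n in Filter.atTop, t ∉ resClass R s n := by
  obtain ⟨N, hN⟩ : ∃ N, t ∉ resClass R s N := by
    by_contra! hall
    have hmem : t - s ∈ ⨅ n, maximalIdeal R ^ n := Submodule.mem_iInf _ |>.2 hall
    rw [Ideal.iInf_pow_eq_bot_of_isLocalRing _ (maximalIdeal.isMaximal R).ne_top] at hmem
    exact sub_ne_zero.2 h hmem
  exact Filter.eventually_atTop.2 ⟨N, fun n hn ht => hN (resClass_anti s hn ht)⟩

theorem exists_resClass_inter_subsingleton (S : Finset R) :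
    ∃ N, ∀ x, (resClass R x N ∩ S).Subsingleton := by
  have hsep : ∀ᶠ n in Filter.atTop, ∀ s ∈ S, ∀ t ∈ S, t ≠ s → t ∉ resClass R s n := by
    simp only [Filter.eventually_all_finset, Filter.eventually_imp_distrib_left]
    exact fun s _ t _ => eventually_notMem_resClass
  obtain ⟨N, hN⟩ := hsep.exists
  refine ⟨N, fun x => ?_⟩
  rintro t ⟨htx, ht⟩ s ⟨hsx, hs⟩
  by_contra hts
  exact hN s hs t ht hts (resClass_eq_of_mem hsx ▸ htx)

theorem exists_not_allChildrenMeet (S : Finset R) (x : R) : ∃ n, ¬ AllChildrenMeet S x n := by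
  obtain ⟨N, hN⟩ := exists_resClass_inter_subsingleton S
  refine ⟨N, fun hall => ?_⟩
  obtain ⟨s, hsx, hs⟩ := hall x (mem_resClass_self x N)
  replace hsx : s ∈ resClass R x N := resClass_anti x N.le_succ hsx
  obtain ⟨y, hy, hys⟩ := exists_mem_resClass_notMem_resClass_succ s N
  have hyx : y ∈ resClass R x N := resClass_eq_of_mem hsx ▸ hy
  obtain ⟨t, hty, ht⟩ := hall y hyx
  have htx : t ∈ resClass R x N := resClass_eq_of_mem hyx ▸ resClass_anti y N.le_succ hty
  obtain rfl : t = s := hN x ⟨htx, ht⟩ ⟨hsx, hs⟩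
  exact hys (mem_resClass_comm.1 hty)

theorem not_allChildrenMeet_blockLevel (S : Finset R) (x : R) :
    ¬ AllChildrenMeet S x (blockLevel S x) :=
  Nat.sInf_mem (exists_not_allChildrenMeet S x)

variable {S : Finset R}

theorem le_blockLevel_iff {x : R} {m : ℕ} :
    m ≤ blockLevel S x ↔ ∀ k < m, AllChildrenMeet S x k :=
  ⟨fun h _ hk => allChildrenMeet_of_lt_blockLevel (hk.trans_le h),
    fun h => not_lt.1 fun hlt => not_allChildrenMeet_blockLevel S x (h _ hlt)⟩

theorem le_blockLevel_of_mem {x y : R} {m : ℕ} (hy : y ∈ resClass R x m)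
    (hm : m ≤ blockLevel S x) : m ≤ blockLevel S y :=
  le_blockLevel_iff.2 fun k hk => (allChildrenMeet_congr hy hk.le).2 (le_blockLevel_iff.1 hm k hk)

theorem blockLevel_eq_of_mem {x y : R} (h : y ∈ resClass R x (blockLevel S x)) :
    blockLevel S y = blockLevel S x :=
  le_antisymm
    (blockLevel_le_of_not_allChildrenMeet fun hy =>
      not_allChildrenMeet_blockLevel S x ((allChildrenMeet_congr h le_rfl).1 hy))
    (le_blockLevel_of_mem h le_rfl)

theorem block_eq_of_mem {x y : R} (h : y ∈ resClass R x (blockLevel S x)) :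
    resClass R y (blockLevel S y) = resClass R x (blockLevel S x) := by
  rw [blockLevel_eq_of_mem h]
  exact resClass_eq_of_mem h

theorem block_eq_of_mem_of_mem {x s t : R} (hs : x ∈ resClass R s (blockLevel S s))
    (ht : x ∈ resClass R t (blockLevel S t)) :
    resClass R s (blockLevel S s) = resClass R t (blockLevel S t) :=
  (block_eq_of_mem hs).symm.trans (block_eq_of_mem ht)

theorem block_inter_nonempty (hS : S.Nonempty) (x : R) :
    (resClass R x (blockLevel S x) ∩ S).Nonempty := by
  cases h : blockLevel S x with
  | zero => simpa [resClass_zero] using hS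
  | succ n => exact allChildrenMeet_of_lt_blockLevel (h ▸ n.lt_succ_self) x (mem_resClass_self x n)

theorem isSPartition_blockLevel (hS : S.Nonempty) : IsSPartition R S (blockLevel S) := by
  refine ⟨?_, fun s _ t _ => ?_, fun s hs => ⟨?_, ?_⟩⟩
  · refine Set.eq_univ_of_forall fun x => ?_
    obtain ⟨s, hsx, hs⟩ := block_inter_nonempty hS x
    exact Set.mem_biUnion hs (block_eq_of_mem hsx ▸ mem_resClass_self x _)
  · rw [or_iff_not_imp_right, Set.not_disjoint_iff]
    exact fun ⟨x, hxs, hxt⟩ => block_eq_of_mem_of_mem hxs hxt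
  · exact ⟨s, resClass_anti s (Nat.le_succ _), s, mem_resClass_self s _, hs⟩
  · obtain ⟨y, hy, hyS⟩ : ∃ y ∈ resClass R s (blockLevel S s),
        ¬ (resClass R y (blockLevel S s + 1) ∩ S).Nonempty := by
      simpa [AllChildrenMeet] using not_allChildrenMeet_blockLevel S s
    exact ⟨y, resClass_eq_of_mem hy ▸ resClass_anti y (Nat.le_succ _),
      Set.not_nonempty_iff_eq_empty.1 hyS⟩

theorem IsSPartition.eq_blockLevel {ρ : R → ℕ} (hρ : IsSPartition R S ρ) {s : R} (hs : s ∈ S) :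
    ρ s = blockLevel S s := by
  obtain ⟨hcover, hdisj, hchildren⟩ := hρ
  apply le_antisymm
  · refine le_blockLevel_iff.2 fun m hm y hy => ?_
    obtain ⟨t, ht, hyt⟩ : ∃ t ∈ S, y ∈ resClass R t (ρ t) := by
      simpa using hcover.ge (Set.mem_univ y)
    have hmt : m < ρ t := by
      by_contra! htm
      have hst : s ∈ resClass R t (ρ t) :=
        resClass_eq_of_mem hyt ▸ resClass_anti y htm (mem_resClass_comm.1 hy)
      rcases hdisj s hs t ht with heq | hd
      · exact (eq_of_resClass_eq heq ▸ hm).not_ge htm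
      · exact Set.disjoint_left.1 hd (mem_resClass_self s _) hst
    exact ⟨t, resClass_anti y hmt ((resClass_eq_of_mem hyt).symm ▸ mem_resClass_self t _), ht⟩
  · obtain ⟨u, hu, hempty⟩ := (hchildren s hs).2
    exact blockLevel_le_of_not_allChildrenMeet fun hall =>
      (hall u (hu (mem_resClass_self u _))).ne_empty hempty

theorem blockRep_mem (hS : S.Nonempty) (x : R) :
    blockRep S x ∈ resClass R x (blockLevel S x) ∩ S :=
  Classical.epsilon_spec (block_inter_nonempty hS x)

theorem blockRep_eq_of_mem {x y : R} (h : y ∈ resClass R x (blockLevel S x)) :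
    blockRep S y = blockRep S x := by
  unfold blockRep
  rw [block_eq_of_mem h]

theorem blockRep_blockRep (hS : S.Nonempty) (x : R) :
    blockRep S (blockRep S x) = blockRep S x :=
  blockRep_eq_of_mem (blockRep_mem hS x).1

variable [DecidableEq R]

/-- The balanced subset `S'`: the points of `S` chosen as representatives of their blocks. -/
noncomputable def blockReps (S : Finset R) : Finset R :=
  S.filter fun s => blockRep S s = s

theorem mem_blockReps {s : R} : s ∈ blockReps S ↔ s ∈ S ∧ blockRep S s = s :=
  Finset.mem_filter

theorem blockRep_mem_blockReps (hS : S.Nonempty) (x : R) : blockRep S x ∈ blockReps S :=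
  mem_blockReps.2 ⟨(blockRep_mem hS x).2, blockRep_blockRep hS x⟩

theorem block_inter_blockReps {s : R} (hs : s ∈ blockReps S) :
    resClass R s (blockLevel S s) ∩ ↑(blockReps S) = {s} := by
  refine Set.eq_singleton_iff_unique_mem.2 ⟨⟨mem_resClass_self s _, hs⟩, ?_⟩
  rintro t ⟨hts, ht⟩
  rw [← (mem_blockReps.1 ht).2, ← (mem_blockReps.1 hs).2]
  exact blockRep_eq_of_mem hts

theorem blockLevel_le_of_resClass_inter_blockReps (hS : S.Nonempty) {s : R} {k : ℕ}
    (hk : resClass R s k ∩ ↑(blockReps S) = {s}) :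
    blockLevel S s ≤ k := by
  by_contra! hlt
  obtain ⟨y, hy, hys⟩ := exists_mem_resClass_notMem_resClass_succ s k
  have hrep : blockRep S y ∈ resClass R s k :=
    resClass_eq_of_mem hy ▸ resClass_anti y (le_blockLevel_of_mem hy hlt.le) (blockRep_mem hS y).1
  obtain rfl : blockRep S y = s := hk.subset ⟨hrep, blockRep_mem_blockReps hS y⟩
  have hsy : y ∈ resClass R (blockRep S y) (blockLevel S (blockRep S y)) := by
    rw [block_eq_of_mem (blockRep_mem hS y).1]
    exact mem_resClass_self y _
  exact hys (resClass_anti _ hlt hsy)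

theorem disjoint_block_of_mem_blockReps {s t : R} (hs : s ∈ blockReps S)
    (ht : t ∈ blockReps S) (hst : s ≠ t) :
    Disjoint (resClass R s (blockLevel S s)) (resClass R t (blockLevel S t)) := by
  refine Set.disjoint_left.2 fun x hxs hxt => hst ?_
  have hts : t ∈ resClass R s (blockLevel S s) :=
    (block_eq_of_mem_of_mem hxs hxt).symm ▸ mem_resClass_self t _
  exact ((block_inter_blockReps hs).subset ⟨hts, ht⟩).symm

theorem iUnion_block_blockReps (hS : S.Nonempty) :
    ⋃ s ∈ blockReps S, resClass R s (blockLevel S s) = Set.univ := by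
  refine Set.eq_univ_of_forall fun x => Set.mem_biUnion (blockRep_mem_blockReps hS x) ?_
  rw [block_eq_of_mem (blockRep_mem hS x).1]
  exact mem_resClass_self x _

theorem isBalanced_blockReps (hS : S.Nonempty) : IsBalanced R (blockReps S) :=
  ⟨⟨_, blockRep_mem_blockReps hS hS.choose⟩, blockLevel S,
    fun _ hs => ⟨block_inter_blockReps hs,
      fun _ => blockLevel_le_of_resClass_inter_blockReps hS⟩,
    fun _ hs _ ht => disjoint_block_of_mem_blockReps hs ht, iUnion_block_blockReps hS⟩

theorem IsSPartition.isAssociatedBalancedSubset_blockReps (hS : S.Nonempty)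
    {ρ : R → ℕ} (hρ : IsSPartition R S ρ) :
    IsAssociatedBalancedSubset R S (blockReps S) ρ := by
  have hρ' : ∀ s ∈ blockReps S, ρ s = blockLevel S s :=
    fun s hs => hρ.eq_blockLevel (mem_blockReps.1 hs).1
  refine ⟨Finset.filter_subset _ _, isBalanced_blockReps hS, fun s hs t ht => ?_, ?_⟩
  · rw [hρ' s hs, hρ' t ht]
    exact disjoint_block_of_mem_blockReps hs ht
  · rw [← iUnion_block_blockReps hS]
    exact Set.iUnion₂_congr fun s hs => by rw [hρ' s hs]

end DiscreteValuationRing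

theorem statement11_general (R : Type*) [CommRing R] [IsDomain R] [IsDiscreteValuationRing R]
    (S : Finset R) (hSne : S.Nonempty) :
    (∃ ρ : R → ℕ, IsSPartition R S ρ) ∧
    (∀ ρ ρ' : R → ℕ, IsSPartition R S ρ → IsSPartition R S ρ' → ∀ s ∈ S, ρ s = ρ' s) ∧
    (∀ ρ : R → ℕ, IsSPartition R S ρ →
      ∃ S' : Finset R, IsAssociatedBalancedSubset R S S' ρ) := by
  classical
  exact ⟨⟨blockLevel S, isSPartition_blockLevel hSne⟩,
    fun ρ ρ' hρ hρ' s hs => (hρ.eq_blockLevel hs).trans (hρ'.eq_blockLevel hs).symm,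
    fun ρ hρ => ⟨_, hρ.isAssociatedBalancedSubset_blockReps hSne⟩⟩

/-- For every finite nonempty `S ⊆ R` there is a uniquely determined
`M`-adic partition `C_S = {s + M^{ρ s} : s ∈ S}` of `R` such that each block contains both
a residue class of the next power of `M` intersecting `S` and one disjoint from `S`;
consequently `S` contains a balanced subset `S'` with `C_{S'} = C_S`. -/
theorem statement11 (R : Type*) [CommRing R] [IsDomain R] [IsDiscreteValuationRing R]
    [Finite (IsLocalRing.ResidueField R)]
    (S : Finset R) (hSne : S.Nonempty) :
    (∃ ρ : R → ℕ, IsSPartition R S ρ) ∧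
    (∀ ρ ρ' : R → ℕ, IsSPartition R S ρ → IsSPartition R S ρ' → ∀ s ∈ S, ρ s = ρ' s) ∧
    (∀ ρ : R → ℕ, IsSPartition R S ρ →
      ∃ S' : Finset R, IsAssociatedBalancedSubset R S S' ρ) :=
  statement11_general R S hSne
end
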